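/- arXiv:math/0509278 — 4 statements merged into one kernel-verified Lean document; each statement's English description precedes it below -/
import Mathlib

section
/- For every integer a ≥ 1 and every x > 0, the functions Φ_a = j_a² and Ψ_a = j_a η_a satisfy Φ_a(x) = −Φ_{a−1}(x) + (4a/x^{2a}) ∫₀^x t^{2a−1} Φ_{a−1}(t) dt and Ψ_a(x) = −Ψ_{a−1}(x) + (4a/x^{2a}) ∫₀^x t^{2a−1} Ψ_{a−1}(t) dt; that is, Φ_a = −S_a^*[Φ_{a−1}] and Ψ_a = −S_a^*[Ψ_{a−1}]. -/
open MeasureTheory Complex Filter intervalIntegral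

noncomputable section

/-- Riccati–Bessel function `j_a`. -/
def jb : ℕ → ℂ → ℂ
  | 0 => Complex.sin
  | a + 1 => fun z => (((a : ℕ) + 1 : ℂ)) / z * jb a z - deriv (jb a) z

/-- Riccati–Bessel function `η_a`. -/
def yb : ℕ → ℂ → ℂ
  | 0 => Complex.cos
  | a + 1 => fun z => (((a : ℕ) + 1 : ℂ)) / z * yb a z - deriv (yb a) z

/-- The double factorial `(2a+1)!!`. -/
def dfact (a : ℕ) : ℕ := ∏ i ∈ Finset.range (a + 1), (2 * i + 1)

/-- A square root of a complex number. -/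
def sqrtC (lam : ℂ) : ℂ := lam ^ (1/2 : ℂ)

/-- The regular solution `u(x,λ)` of the free singular equation. -/
def uSol (a : ℕ) (x : ℝ) (lam : ℂ) : ℂ :=
  (dfact a : ℂ) / sqrtC lam ^ (a + 1) * jb a (sqrtC lam * x)

/-- The singular solution `v(x,λ)` of the free singular equation. -/
def vSol (a : ℕ) (x : ℝ) (lam : ℂ) : ℂ :=
  -(sqrtC lam ^ a / (dfact a : ℂ)) * yb a (sqrtC lam * x)

/-- The Green function `G(x,t,λ)`. -/
def green (a : ℕ) (x t : ℝ) (lam : ℂ) : ℂ :=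
  vSol a x lam * uSol a t lam - uSol a x lam * vSol a t lam

/-- The Picard iterates `φ_k`. -/
def phiIter (a : ℕ) (q : ℝ → ℂ) : ℕ → ℝ → ℂ → ℂ
  | 0 => fun x lam => uSol a x lam
  | k + 1 => fun x lam => ∫ t in (0:ℝ)..x, green a x t lam * q t * phiIter a q k t lam

/-- The regular solution `φ(x,λ,q)`. -/
def phiSol (a : ℕ) (q : ℝ → ℂ) (x : ℝ) (lam : ℂ) : ℂ := ∑' k, phiIter a q k x lam

/-- The Picard iterates `ψ̃_k`. -/
def psiIter (a : ℕ) (q : ℝ → ℂ) : ℕ → ℝ → ℂ → ℂ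
  | 0 => fun x lam => vSol a x lam
  | k + 1 => fun x lam => -∫ t in x..(1:ℝ), green a x t lam * q t * psiIter a q k t lam

/-- The singular solution `ψ̃(x,λ,q)`. -/
def psiSol (a : ℕ) (q : ℝ → ℂ) (x : ℝ) (lam : ℂ) : ℂ := ∑' k, psiIter a q k x lam

/-- Lebesgue measure restricted to `(0,1)`. -/
def mu01 : Measure ℝ := volume.restrict (Set.Ioo 0 1)


/-- Polynomial-coefficient versions of Riccati-Bessel functions: `z^a * f_a z`. -/
def RB (f0 f1 : ℂ → ℂ) : ℕ → ℂ → ℂ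
  | 0 => f0
  | 1 => f1
  | (n + 2) => fun z => (2 * (n : ℂ) + 3) * RB f0 f1 (n + 1) z - z ^ 2 * RB f0 f1 n z

/-- Derivatives of `RB`. -/
def RBD (d0 f0 f1 : ℂ → ℂ) : ℕ → ℂ → ℂ
  | 0 => d0
  | (n + 1) => fun z => z * RB f0 f1 n z

variable {f0 f1 d0 : ℂ → ℂ}

lemma rb_rec (hf1 : ∀ z, f1 z = f0 z - z * d0 z) (n : ℕ) (z : ℂ) :
    RB f0 f1 (n + 1) z = (2 * (n : ℂ) + 1) * RB f0 f1 n z - z * RBD d0 f0 f1 n z := by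
  cases n with
  | zero => simp [RB, RBD, hf1 z]
  | succ m => simp [RB, RBD]; push_cast; ring

lemma rb_hasDerivAt (hd0 : ∀ z, HasDerivAt f0 (d0 z) z)
    (hd1 : ∀ z, HasDerivAt f1 (z * f0 z) z)
    (hf1 : ∀ z, f1 z = f0 z - z * d0 z) :
    ∀ n z, HasDerivAt (RB f0 f1 n) (RBD d0 f0 f1 n z) z := by
  have key : ∀ n, (∀ z, HasDerivAt (RB f0 f1 n) (RBD d0 f0 f1 n z) z) ∧
      (∀ z, HasDerivAt (RB f0 f1 (n + 1)) (RBD d0 f0 f1 (n + 1) z) z) := by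
    intro n
    induction n with
    | zero => exact ⟨hd0, fun z => hd1 z⟩
    | succ m ih =>
      refine ⟨ih.2, fun z => ?_⟩
      have h1 := ih.2 z
      have h2 := ih.1 z
      have hz2 : HasDerivAt (fun w : ℂ => w ^ 2 * RB f0 f1 m w)
          (2 * z * RB f0 f1 m z + z ^ 2 * RBD d0 f0 f1 m z) z := by
        have := (hasDerivAt_pow 2 z).mul h2
        refine this.congr_deriv ?_
        norm_num
      have := (h1.const_mul (2 * (m : ℂ) + 3)).sub hz2
      have hgoal : HasDerivAt (RB f0 f1 (m + 2))
          ((2 * (m : ℂ) + 3) * RBD d0 f0 f1 (m + 1) z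
            - (2 * z * RB f0 f1 m z + z ^ 2 * RBD d0 f0 f1 m z)) z := this
      have heq : (2 * (m : ℂ) + 3) * RBD d0 f0 f1 (m + 1) z
            - (2 * z * RB f0 f1 m z + z ^ 2 * RBD d0 f0 f1 m z)
          = RBD d0 f0 f1 (m + 2) z := by
        have h3 : RBD d0 f0 f1 (m + 1) z = z * RB f0 f1 m z := rfl
        have h4 : RBD d0 f0 f1 (m + 2) z = z * RB f0 f1 (m + 1) z := rfl
        rw [h3, h4, rb_rec hf1 m z]
        ring
      rwa [heq] at hgoal
  exact fun n => (key n).1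

lemma rb_corr (hd0 : ∀ z, HasDerivAt f0 (d0 z) z)
    (hd1 : ∀ z, HasDerivAt f1 (z * f0 z) z)
    (hf1 : ∀ z, f1 z = f0 z - z * d0 z)
    (g : ℕ → ℂ → ℂ) (hg0 : ∀ z, g 0 z = f0 z)
    (hgS : ∀ a z, g (a + 1) z = ((a : ℂ) + 1) / z * g a z - deriv (g a) z) :
    ∀ a (z : ℂ), z ≠ 0 → g a z = RB f0 f1 a z * z ^ (-(a : ℤ)) := by
  intro a
  induction a with
  | zero => intro z hz; simpa [RB] using hg0 z
  | succ n ih =>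
    intro z hz
    have heq : g n =ᶠ[nhds z] (fun w => RB f0 f1 n w * w ^ (-(n : ℤ))) := by
      have hmem : {w : ℂ | w ≠ 0} ∈ nhds z := isOpen_compl_singleton.mem_nhds hz
      filter_upwards [hmem] with w hw
      exact ih w hw
    have hD : HasDerivAt (fun w : ℂ => RB f0 f1 n w * w ^ (-(n : ℤ)))
        (RBD d0 f0 f1 n z * z ^ (-(n : ℤ))
          + RB f0 f1 n z * (((-(n : ℤ) : ℤ) : ℂ) * z ^ (-(n : ℤ) - 1))) z :=
      (rb_hasDerivAt hd0 hd1 hf1 n z).mul (hasDerivAt_zpow (-(n : ℤ)) z (Or.inl hz))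
    have hderiv : deriv (g n) z = RBD d0 f0 f1 n z * z ^ (-(n : ℤ))
        + RB f0 f1 n z * (((-(n : ℤ) : ℤ) : ℂ) * z ^ (-(n : ℤ) - 1)) := by
      rw [heq.deriv_eq]; exact hD.deriv
    have hpow : z ^ (-(n : ℤ)) = z ^ (-(n : ℤ) - 1) * z := by
      rw [← zpow_add_one₀ hz]; ring_nf
    have hpow2 : z ^ (-((n : ℕ) + 1 : ℕ) : ℤ) = z ^ (-(n : ℤ) - 1) := by
      congr 1; push_cast; ring
    rw [hgS, hderiv, ih z hz, rb_rec hf1 n z, hpow2, hpow]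
    field_simp
    push_cast
    ring

lemma rb_zero (hf1 : f1 0 = 0) : ∀ n, RB f0 f1 (n + 1) 0 = 0 := by
  intro n
  induction n with
  | zero => simpa [RB] using hf1
  | succ m ih => simp [RB, ih]

lemma rb_continuous (hd0 : ∀ z, HasDerivAt f0 (d0 z) z)
    (hd1 : ∀ z, HasDerivAt f1 (z * f0 z) z)
    (hf1 : ∀ z, f1 z = f0 z - z * d0 z) (n : ℕ) :
    Continuous (RB f0 f1 n) := by
  have : Differentiable ℂ (RB f0 f1 n) :=
    fun z => (rb_hasDerivAt hd0 hd1 hf1 n z).differentiableAt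
  exact this.continuous

variable {g0 g1 e0 : ℂ → ℂ}

/-- Derivative of the key combination. -/
lemma rb_H_hasDerivAt (hd0 : ∀ z, HasDerivAt f0 (d0 z) z)
    (hd1 : ∀ z, HasDerivAt f1 (z * f0 z) z)
    (hf1 : ∀ z, f1 z = f0 z - z * d0 z)
    (he0 : ∀ z, HasDerivAt g0 (e0 z) z)
    (he1 : ∀ z, HasDerivAt g1 (z * g0 z) z)
    (hg1 : ∀ z, g1 z = g0 z - z * e0 z) (b : ℕ) (z : ℂ) :
    HasDerivAt (fun w => RB f0 f1 (b + 1) w * RB g0 g1 (b + 1) w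
        + w ^ 2 * (RB f0 f1 b w * RB g0 g1 b w))
      ((4 * (b : ℂ) + 4) * (z * (RB f0 f1 b z * RB g0 g1 b z))) z := by
  have hF1 := rb_hasDerivAt hd0 hd1 hf1 (b + 1) z
  have hF0 := rb_hasDerivAt hd0 hd1 hf1 b z
  have hG1 := rb_hasDerivAt he0 he1 hg1 (b + 1) z
  have hG0 := rb_hasDerivAt he0 he1 hg1 b z
  have key : HasDerivAt (fun w => RB f0 f1 (b + 1) w * RB g0 g1 (b + 1) w
        + w ^ 2 * (RB f0 f1 b w * RB g0 g1 b w))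
      (RBD d0 f0 f1 (b + 1) z * RB g0 g1 (b + 1) z
        + RB f0 f1 (b + 1) z * RBD e0 g0 g1 (b + 1) z
        + (2 * z * (RB f0 f1 b z * RB g0 g1 b z)
          + z ^ 2 * (RBD d0 f0 f1 b z * RB g0 g1 b z
            + RB f0 f1 b z * RBD e0 g0 g1 b z))) z := by
    have h1 := hF1.mul hG1
    have h2 := (hF0.mul hG0)
    have h3 := (hasDerivAt_pow 2 z).mul h2
    have := h1.add h3
    refine this.congr_deriv ?_
    push_cast [pow_one, Pi.mul_apply]
    ring
  convert key using 1
  have h3 : RBD d0 f0 f1 (b + 1) z = z * RB f0 f1 b z := rfl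
  have h4 : RBD e0 g0 g1 (b + 1) z = z * RB g0 g1 b z := rfl
  rw [h3, h4, rb_rec hf1 b z, rb_rec hg1 b z]
  ring

lemma rb_integral (hd0 : ∀ z, HasDerivAt f0 (d0 z) z)
    (hd1 : ∀ z, HasDerivAt f1 (z * f0 z) z)
    (hf1 : ∀ z, f1 z = f0 z - z * d0 z)
    (he0 : ∀ z, HasDerivAt g0 (e0 z) z)
    (he1 : ∀ z, HasDerivAt g1 (z * g0 z) z)
    (hg1 : ∀ z, g1 z = g0 z - z * e0 z)
    (hF10 : f1 0 = 0) (b : ℕ) (x : ℝ) :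
    ∫ t in (0:ℝ)..x, (4 * (b : ℂ) + 4) * ((t : ℂ) * (RB f0 f1 b t * RB g0 g1 b t))
      = RB f0 f1 (b + 1) x * RB g0 g1 (b + 1) x
        + (x : ℂ) ^ 2 * (RB f0 f1 b x * RB g0 g1 b x) := by
  have hc1 : Continuous (RB f0 f1 b) := rb_continuous hd0 hd1 hf1 b
  have hc2 : Continuous (RB g0 g1 b) := rb_continuous he0 he1 hg1 b
  have hcI : Continuous (fun t : ℝ =>
      (4 * (b : ℂ) + 4) * ((t : ℂ) * (RB f0 f1 b t * RB g0 g1 b t))) := by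
    exact continuous_const.mul (Complex.continuous_ofReal.mul
      ((hc1.comp Complex.continuous_ofReal).mul (hc2.comp Complex.continuous_ofReal)))
  have hderiv : ∀ t ∈ Set.uIcc (0:ℝ) x,
      HasDerivAt (fun t : ℝ => RB f0 f1 (b + 1) t * RB g0 g1 (b + 1) t
          + (t : ℂ) ^ 2 * (RB f0 f1 b t * RB g0 g1 b t))
        ((4 * (t : ℂ) * (b : ℂ) + 4 * (t : ℂ)) * (RB f0 f1 b t * RB g0 g1 b t)) t := by
    intro t _
    have := (rb_H_hasDerivAt hd0 hd1 hf1 he0 he1 hg1 b (t : ℂ)).comp_ofReal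
    convert this using 1
    ring
  have := intervalIntegral.integral_eq_sub_of_hasDerivAt hderiv
    (by apply Continuous.intervalIntegrable; continuity)
  have h0 : RB f0 f1 (b + 1) (0 : ℝ) * RB g0 g1 (b + 1) (0 : ℝ)
      + ((0 : ℝ) : ℂ) ^ 2 * (RB f0 f1 b (0 : ℝ) * RB g0 g1 b (0 : ℝ)) = 0 := by
    push_cast
    rw [rb_zero hF10 b]
    ring
  calc ∫ t in (0:ℝ)..x, (4 * (b : ℂ) + 4) * ((t : ℂ) * (RB f0 f1 b t * RB g0 g1 b t))
      = ∫ t in (0:ℝ)..x,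
          (4 * (t : ℂ) * (b : ℂ) + 4 * (t : ℂ)) * (RB f0 f1 b t * RB g0 g1 b t) := by
        apply intervalIntegral.integral_congr
        intro t _
        ring
    _ = _ := by rw [this, h0, sub_zero]

section Instantiate

lemma sin1_hasDerivAt (z : ℂ) :
    HasDerivAt (fun w : ℂ => Complex.sin w - w * Complex.cos w) (z * Complex.sin z) z := by
  have h := (Complex.hasDerivAt_sin z).sub ((hasDerivAt_id z).mul (Complex.hasDerivAt_cos z))
  simp only [id] at h
  refine h.congr_deriv ?_
  ring

lemma cos1_hasDerivAt (z : ℂ) :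
    HasDerivAt (fun w : ℂ => Complex.cos w + w * Complex.sin w) (z * Complex.cos z) z := by
  have h := (Complex.hasDerivAt_cos z).add ((hasDerivAt_id z).mul (Complex.hasDerivAt_sin z))
  simp only [id] at h
  refine h.congr_deriv ?_
  ring

lemma jb_eq (a : ℕ) (z : ℂ) (hz : z ≠ 0) :
    jb a z = RB Complex.sin (fun w => Complex.sin w - w * Complex.cos w) a z * z ^ (-(a : ℤ)) :=
  rb_corr (d0 := Complex.cos) Complex.hasDerivAt_sin sin1_hasDerivAt (fun _ => rfl)
    jb (fun _ => rfl) (fun _ _ => rfl) a z hz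

lemma yb_eq (a : ℕ) (z : ℂ) (hz : z ≠ 0) :
    yb a z = RB Complex.cos (fun w => Complex.cos w + w * Complex.sin w) a z * z ^ (-(a : ℤ)) :=
  rb_corr (d0 := fun w => -Complex.sin w) Complex.hasDerivAt_cos cos1_hasDerivAt
    (fun z => by ring)
    yb (fun _ => rfl) (fun _ _ => rfl) a z hz

end Instantiate

/-- the reduction identities `Φ_a = −S_a^*[Φ_{a−1}]`, `Ψ_a = −S_a^*[Ψ_{a−1}]`
for `Φ_a = j_a²`, `Ψ_a = j_a η_a`. -/
theorem statement13 (a : ℕ) (ha : 1 ≤ a) (x : ℝ) (hx : 0 < x) :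
    jb a (x : ℂ) ^ 2
      = -(jb (a - 1) (x : ℂ) ^ 2)
          + ((4 * a : ℝ) : ℂ) / (x : ℂ) ^ (2 * a)
              * ∫ t in (0:ℝ)..x, (t : ℂ) ^ (2 * a - 1) * jb (a - 1) (t : ℂ) ^ 2 ∧
    jb a (x : ℂ) * yb a (x : ℂ)
      = -(jb (a - 1) (x : ℂ) * yb (a - 1) (x : ℂ))
          + ((4 * a : ℝ) : ℂ) / (x : ℂ) ^ (2 * a)
              * ∫ t in (0:ℝ)..x,
                  (t : ℂ) ^ (2 * a - 1) * (jb (a - 1) (t : ℂ) * yb (a - 1) (t : ℂ)) := by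
  obtain ⟨b, rfl⟩ : ∃ b, a = b + 1 := ⟨a - 1, by omega⟩
  set JJ := RB Complex.sin (fun w => Complex.sin w - w * Complex.cos w) with hJJ
  set YY := RB Complex.cos (fun w => Complex.cos w + w * Complex.sin w) with hYY
  have hX : (x : ℂ) ≠ 0 := by
    simp only [ne_eq, Complex.ofReal_eq_zero]
    exact hx.ne'
  have h44 : (4 * (b : ℂ) + 4) ≠ 0 := by
    have : ((4 * b + 4 : ℕ) : ℂ) ≠ 0 := Nat.cast_ne_zero.mpr (by omega)
    push_cast at this
    exact this
  have hsub : 2 * (b + 1) - 1 = 2 * b + 1 := by omega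
  have huIoc : Set.uIoc (0:ℝ) x = Set.Ioc (0:ℝ) x := Set.uIoc_of_le hx.le
  -- a generic step for both parts
  have main : ∀ (g0 g1 e0 : ℂ → ℂ) (f : ℕ → ℂ → ℂ),
      (∀ z, HasDerivAt g0 (e0 z) z) →
      (∀ z, HasDerivAt g1 (z * g0 z) z) →
      (∀ z, g1 z = g0 z - z * e0 z) →
      (∀ n (z : ℂ), z ≠ 0 → f n z = RB g0 g1 n z * z ^ (-(n : ℤ))) →
      jb (b + 1) (x : ℂ) * f (b + 1) (x : ℂ)
        = -(jb b (x : ℂ) * f b (x : ℂ))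
            + ((4 * ((b:ℝ) + 1) : ℝ) : ℂ) / (x : ℂ) ^ (2 * (b + 1))
                * ∫ t in (0:ℝ)..x, (t : ℂ) ^ (2 * (b + 1) - 1) * (jb b (t : ℂ) * f b (t : ℂ)) := by
    intro g0 g1 e0 f he0 he1 hg1 hfeq
    have hI := rb_integral (f0 := Complex.sin) (f1 := fun w => Complex.sin w - w * Complex.cos w)
      (d0 := Complex.cos) (g0 := g0) (g1 := g1) (e0 := e0)
      Complex.hasDerivAt_sin sin1_hasDerivAt (fun _ => rfl) he0 he1 hg1 (by simp) b x
    have hcongr : (∫ t in (0:ℝ)..x, (t : ℂ) ^ (2 * (b + 1) - 1) * (jb b (t : ℂ) * f b (t : ℂ)))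
        = (4 * (b : ℂ) + 4)⁻¹
            * ∫ t in (0:ℝ)..x, (4 * (b : ℂ) + 4) * ((t : ℂ) * (JJ b t * RB g0 g1 b t)) := by
      rw [← intervalIntegral.integral_const_mul]
      apply intervalIntegral.integral_congr_ae
      apply MeasureTheory.ae_of_all
      intro t ht
      rw [huIoc] at ht
      have ht0 : (t : ℂ) ≠ 0 := by
        simp only [ne_eq, Complex.ofReal_eq_zero]
        exact ht.1.ne'
      rw [hsub, jb_eq b t ht0, hfeq b t ht0, zpow_neg, zpow_natCast]
      field_simp
      ring
    rw [jb_eq (b + 1) (x : ℂ) hX, jb_eq b (x : ℂ) hX,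
      hfeq (b + 1) (x : ℂ) hX, hfeq b (x : ℂ) hX, hcongr, hI]
    rw [zpow_neg, zpow_natCast, zpow_neg, zpow_natCast]
    push_cast
    field_simp
    ring
  constructor
  · have h := main Complex.sin (fun w => Complex.sin w - w * Complex.cos w) Complex.cos jb
      Complex.hasDerivAt_sin sin1_hasDerivAt (fun _ => rfl) jb_eq
    simpa [sq, Nat.add_sub_cancel] using h
  · have h := main Complex.cos (fun w => Complex.cos w + w * Complex.sin w)
      (fun w => -Complex.sin w) yb
      Complex.hasDerivAt_cos cos1_hasDerivAt (fun z => by ring) yb_eq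
    simpa [Nat.add_sub_cancel] using h
end
end

section
/- For every integer a ≥ 1 and every x > 0, the derivatives of Φ_a = j_a² and Ψ_a = j_a η_a satisfy Φ_a'(x) = −Φ_{a−1}'(x) + (4a/x^{2a+1}) ∫₀^x t^{2a} Φ_{a−1}'(t) dt and Ψ_a'(x) = −Ψ_{a−1}'(x) + (4a/x^{2a+1}) ∫₀^x t^{2a} Ψ_{a−1}'(t) dt; that is, Φ_a' = −A_a[Φ_{a−1}'] and Ψ_a' = −A_a[Ψ_{a−1}']. -/
open MeasureTheory Complex Filter intervalIntegral

noncomputable section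

/-- analyticity propagation -/
lemma rb_anal (u : ℕ → ℂ → ℂ)
    (hrec : ∀ (a : ℕ) (z : ℂ), u (a+1) z = ((a : ℂ) + 1)/z * u a z - deriv (u a) z)
    (h0 : AnalyticOnNhd ℂ (u 0) Set.univ) :
    ∀ a : ℕ, AnalyticOnNhd ℂ (u a) {(0:ℂ)}ᶜ := by
  intro a
  induction a with
  | zero => exact h0.mono (Set.subset_univ _)
  | succ a ih =>
    have : u (a+1) = fun z => ((a : ℂ) + 1)/z * u a z - deriv (u a) z := funext (hrec a)
    rw [this]
    exact ((analyticOnNhd_const.div analyticOnNhd_id (fun z hz => hz)).mul ih).sub ih.deriv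

/-- derivative recurrence -/
lemma rb_D (u : ℕ → ℂ → ℂ) (a : ℕ)
    (hrec : ∀ (a : ℕ) (z : ℂ), u (a+1) z = ((a : ℂ) + 1)/z * u a z - deriv (u a) z)
    (hPa : AnalyticOnNhd ℂ (u a) {(0:ℂ)}ᶜ)
    (hOa : ∀ z : ℂ, z ≠ 0 → deriv (deriv (u a)) z = ((a:ℂ)*((a:ℂ)+1)/z^2 - 1) * u a z)
    (z : ℂ) (hz : z ≠ 0) :
    deriv (u (a+1)) z = u a z - ((a:ℂ)+1)/z * u (a+1) z := by
  have heq : u (a+1) = fun z => ((a : ℂ) + 1)/z * u a z - deriv (u a) z := funext (hrec a)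
  have hu : HasDerivAt (u a) (deriv (u a) z) z := (hPa z hz).differentiableAt.hasDerivAt
  have hdu : HasDerivAt (deriv (u a)) (deriv (deriv (u a)) z) z :=
    (hPa.deriv z hz).differentiableAt.hasDerivAt
  have hc : HasDerivAt (fun z : ℂ => ((a : ℂ) + 1)/z) (((a:ℂ)+1) * -(z^2)⁻¹) z := by
    simpa only [div_eq_mul_inv] using (hasDerivAt_inv hz).const_mul ((a:ℂ)+1)
  have H : HasDerivAt (u (a+1))
      ((((a:ℂ)+1) * -(z^2)⁻¹) * u a z + ((a:ℂ)+1)/z * deriv (u a) z - deriv (deriv (u a)) z) z := by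
    rw [heq]; exact (hc.mul hu).sub hdu
  rw [H.deriv, hOa z hz, hrec a z]
  field_simp
  ring

lemma rb_PO (u : ℕ → ℂ → ℂ)
    (hrec : ∀ (a : ℕ) (z : ℂ), u (a+1) z = ((a : ℂ) + 1)/z * u a z - deriv (u a) z)
    (h0 : AnalyticOnNhd ℂ (u 0) Set.univ)
    (hode0 : ∀ z, deriv (deriv (u 0)) z = -u 0 z) :
    ∀ a : ℕ, ∀ z : ℂ, z ≠ 0 → deriv (deriv (u a)) z = ((a:ℂ)*((a:ℂ)+1)/z^2 - 1) * u a z := by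
  intro a
  induction a with
  | zero => intro z hz; rw [hode0 z]; push_cast; ring
  | succ a ih =>
    intro z hz
    have hPa := rb_anal u hrec h0 a
    have hPa1 := rb_anal u hrec h0 (a+1)
    have hD : ∀ w : ℂ, w ≠ 0 → deriv (u (a+1)) w = u a w - ((a:ℂ)+1)/w * u (a+1) w :=
      fun w hw => rb_D u a hrec hPa ih w hw
    have hev : deriv (u (a+1)) =ᶠ[nhds z] fun w => u a w - ((a:ℂ)+1)/w * u (a+1) w := by
      filter_upwards [isOpen_compl_singleton.mem_nhds hz] with w hw
      exact hD w hw
    rw [hev.deriv_eq]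
    have hu : HasDerivAt (u a) (deriv (u a) z) z := (hPa z hz).differentiableAt.hasDerivAt
    have hu1 : HasDerivAt (u (a+1)) (deriv (u (a+1)) z) z :=
      (hPa1 z hz).differentiableAt.hasDerivAt
    have hc : HasDerivAt (fun z : ℂ => ((a : ℂ) + 1)/z) (((a:ℂ)+1) * -(z^2)⁻¹) z := by
      simpa only [div_eq_mul_inv] using (hasDerivAt_inv hz).const_mul ((a:ℂ)+1)
    have H : HasDerivAt (fun w => u a w - ((a:ℂ)+1)/w * u (a+1) w)
        (deriv (u a) z - ((((a:ℂ)+1) * -(z^2)⁻¹) * u (a+1) z + ((a:ℂ)+1)/z * deriv (u (a+1)) z)) z :=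
      hu.sub (hc.mul hu1)
    rw [H.deriv]
    have h1 : deriv (u a) z = ((a : ℂ) + 1)/z * u a z - u (a+1) z := by
      rw [hrec a z]; ring
    rw [h1, hD z hz, hrec a z]
    field_simp
    push_cast
    ring

lemma rb_bound (u : ℕ → ℂ → ℂ)
    (hrec : ∀ (a : ℕ) (z : ℂ), u (a+1) z = ((a : ℂ) + 1)/z * u a z - deriv (u a) z)
    (hD : ∀ (a : ℕ) (z : ℂ), z ≠ 0 → deriv (u (a+1)) z = u a z - ((a:ℂ)+1)/z * u (a+1) z)
    (e : ℕ) (K : ℝ)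
    (hb0 : ∀ t : ℝ, t ∈ Set.Ioc (0:ℝ) 1 →
      ‖u 0 (t:ℂ)‖ ≤ K * t ^ e ∧ t * ‖deriv (u 0) (t:ℂ)‖ ≤ K * t ^ e) :
    ∀ a : ℕ, ∃ C : ℝ, ∀ t : ℝ, t ∈ Set.Ioc (0:ℝ) 1 →
      t ^ a * ‖u a (t:ℂ)‖ ≤ C * t ^ e ∧ t ^ (a+1) * ‖deriv (u a) (t:ℂ)‖ ≤ C * t ^ e := by
  intro a
  induction a with
  | zero =>
    refine ⟨K, fun t ht => ?_⟩
    obtain ⟨h1, h2⟩ := hb0 t ht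
    simpa using ⟨h1, h2⟩
  | succ a ih =>
    obtain ⟨C, hC⟩ := ih
    have hC0 : 0 ≤ C := by
      have h := (hC 1 ⟨one_pos, le_refl 1⟩).1
      simp only [one_pow, one_mul, mul_one] at h
      exact le_trans (norm_nonneg _) h
    refine ⟨((a:ℝ)+2) * C + (1 + ((a:ℝ)+1) * ((a:ℝ)+2)) * C, fun t ht => ?_⟩
    obtain ⟨ht1, ht2⟩ := ht
    have htmem : t ∈ Set.Ioc (0:ℝ) 1 := ⟨ht1, ht2⟩
    have htne : (t:ℂ) ≠ 0 := Complex.ofReal_ne_zero.mpr (ne_of_gt ht1)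
    have hte : (0:ℝ) < t ^ e := pow_pos ht1 e
    obtain ⟨hCa, hCd⟩ := hC t htmem
    have hnorm : ‖((a:ℂ)+1)/(t:ℂ)‖ = ((a:ℝ)+1)/t := by
      have h1 : ((a:ℂ)+1)/(t:ℂ) = (((((a:ℝ)+1)/t) : ℝ) : ℂ) := by push_cast; ring
      rw [h1, Complex.norm_real, Real.norm_eq_abs, abs_of_pos (by positivity)]
    have key1 : t ^ (a+1) * ‖u (a+1) (t:ℂ)‖ ≤ ((a:ℝ)+2) * (C * t ^ e) := by
      calc t ^ (a+1) * ‖u (a+1) (t:ℂ)‖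
          ≤ t ^ (a+1) * (((a:ℝ)+1)/t * ‖u a (t:ℂ)‖ + ‖deriv (u a) (t:ℂ)‖) := by
            apply mul_le_mul_of_nonneg_left _ (by positivity)
            rw [hrec a (t:ℂ)]
            refine le_trans (norm_sub_le _ _) ?_
            rw [norm_mul, hnorm]
        _ = ((a:ℝ)+1) * (t ^ a * ‖u a (t:ℂ)‖) + t ^ (a+1) * ‖deriv (u a) (t:ℂ)‖ := by
            field_simp
            ring
        _ ≤ ((a:ℝ)+1) * (C * t ^ e) + C * t ^ e :=
            add_le_add (mul_le_mul_of_nonneg_left hCa (by positivity)) hCd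
        _ = ((a:ℝ)+2) * (C * t ^ e) := by ring
    constructor
    · refine le_trans key1 ?_
      have : (0:ℝ) ≤ (1 + ((a:ℝ)+1) * ((a:ℝ)+2)) * C * t ^ e := by positivity
      nlinarith
    · have key2 : t ^ (a+2) * ‖deriv (u (a+1)) (t:ℂ)‖
          ≤ (1 + ((a:ℝ)+1) * ((a:ℝ)+2)) * C * t ^ e := by
        calc t ^ (a+2) * ‖deriv (u (a+1)) (t:ℂ)‖
            ≤ t ^ (a+2) * (‖u a (t:ℂ)‖ + ((a:ℝ)+1)/t * ‖u (a+1) (t:ℂ)‖) := by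
              apply mul_le_mul_of_nonneg_left _ (by positivity)
              rw [hD a (t:ℂ) htne]
              refine le_trans (norm_sub_le _ _) ?_
              rw [norm_mul, hnorm]
          _ = t^2 * (t ^ a * ‖u a (t:ℂ)‖) + ((a:ℝ)+1) * (t ^ (a+1) * ‖u (a+1) (t:ℂ)‖) := by
              field_simp
              ring
          _ ≤ 1 * (C * t ^ e) + ((a:ℝ)+1) * (((a:ℝ)+2) * (C * t ^ e)) := by
              refine add_le_add (mul_le_mul (by nlinarith) hCa (by positivity) zero_le_one) ?_
              exact mul_le_mul_of_nonneg_left key1 (by positivity)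
          _ = (1 + ((a:ℝ)+1) * ((a:ℝ)+2)) * C * t ^ e := by ring
      refine le_trans key2 ?_
      have : (0:ℝ) ≤ ((a:ℝ)+2) * C * t ^ e := by positivity
      nlinarith

lemma jb_rec : ∀ (a : ℕ) (z : ℂ), jb (a+1) z = ((a : ℂ) + 1)/z * jb a z - deriv (jb a) z :=
  fun _ _ => rfl

lemma yb_rec : ∀ (a : ℕ) (z : ℂ), yb (a+1) z = ((a : ℂ) + 1)/z * yb a z - deriv (yb a) z :=
  fun _ _ => rfl

lemma jb_anal : ∀ a : ℕ, AnalyticOnNhd ℂ (jb a) {(0:ℂ)}ᶜ :=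
  rb_anal jb jb_rec
    ((Complex.differentiable_sin.differentiableOn).analyticOnNhd isOpen_univ)

lemma yb_anal : ∀ a : ℕ, AnalyticOnNhd ℂ (yb a) {(0:ℂ)}ᶜ :=
  rb_anal yb yb_rec
    ((Complex.differentiable_cos.differentiableOn).analyticOnNhd isOpen_univ)

lemma jb_ode0 : ∀ z : ℂ, deriv (deriv (jb 0)) z = -jb 0 z := by
  intro z
  show deriv (deriv Complex.sin) z = -Complex.sin z
  rw [Complex.deriv_sin]
  exact Complex.deriv_cos

lemma yb_ode0 : ∀ z : ℂ, deriv (deriv (yb 0)) z = -yb 0 z := by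
  intro z
  show deriv (deriv Complex.cos) z = -Complex.cos z
  rw [Complex.deriv_cos']
  rw [deriv.fun_neg, Complex.deriv_sin]

lemma jb_ode : ∀ (a : ℕ) (z : ℂ), z ≠ 0 →
    deriv (deriv (jb a)) z = ((a:ℂ)*((a:ℂ)+1)/z^2 - 1) * jb a z :=
  rb_PO jb jb_rec
    ((Complex.differentiable_sin.differentiableOn).analyticOnNhd isOpen_univ) jb_ode0

lemma yb_ode : ∀ (a : ℕ) (z : ℂ), z ≠ 0 →
    deriv (deriv (yb a)) z = ((a:ℂ)*((a:ℂ)+1)/z^2 - 1) * yb a z :=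
  rb_PO yb yb_rec
    ((Complex.differentiable_cos.differentiableOn).analyticOnNhd isOpen_univ) yb_ode0

lemma jb_D : ∀ (a : ℕ) (z : ℂ), z ≠ 0 →
    deriv (jb (a+1)) z = jb a z - ((a:ℂ)+1)/z * jb (a+1) z :=
  fun a z hz => rb_D jb a jb_rec (jb_anal a) (jb_ode a) z hz

lemma yb_D : ∀ (a : ℕ) (z : ℂ), z ≠ 0 →
    deriv (yb (a+1)) z = yb a z - ((a:ℂ)+1)/z * yb (a+1) z :=
  fun a z hz => rb_D yb a yb_rec (yb_anal a) (yb_ode a) z hz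

lemma jb_bound : ∀ a : ℕ, ∃ C : ℝ, ∀ t : ℝ, t ∈ Set.Ioc (0:ℝ) 1 →
    t ^ a * ‖jb a (t:ℂ)‖ ≤ C * t ^ 1 ∧ t ^ (a+1) * ‖deriv (jb a) (t:ℂ)‖ ≤ C * t ^ 1 := by
  refine rb_bound jb jb_rec jb_D 1 1 ?_
  intro t ht
  obtain ⟨ht1, ht2⟩ := ht
  constructor
  · show ‖Complex.sin (t:ℂ)‖ ≤ 1 * t ^ 1
    rw [← Complex.ofReal_sin, Complex.norm_real, Real.norm_eq_abs]
    calc |Real.sin t| ≤ |t| := Real.abs_sin_le_abs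
      _ = 1 * t ^ 1 := by rw [abs_of_pos ht1]; ring
  · show t * ‖deriv Complex.sin (t:ℂ)‖ ≤ 1 * t ^ 1
    rw [Complex.deriv_sin, ← Complex.ofReal_cos, Complex.norm_real, Real.norm_eq_abs]
    have : |Real.cos t| ≤ 1 := Real.abs_cos_le_one t
    nlinarith

lemma yb_bound : ∀ a : ℕ, ∃ C : ℝ, ∀ t : ℝ, t ∈ Set.Ioc (0:ℝ) 1 →
    t ^ a * ‖yb a (t:ℂ)‖ ≤ C * t ^ 0 ∧ t ^ (a+1) * ‖deriv (yb a) (t:ℂ)‖ ≤ C * t ^ 0 := by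
  refine rb_bound yb yb_rec yb_D 0 1 ?_
  intro t ht
  obtain ⟨ht1, ht2⟩ := ht
  constructor
  · show ‖Complex.cos (t:ℂ)‖ ≤ 1 * t ^ 0
    rw [← Complex.ofReal_cos, Complex.norm_real, Real.norm_eq_abs]
    simpa using Real.abs_cos_le_one t
  · show t * ‖deriv Complex.cos (t:ℂ)‖ ≤ 1 * t ^ 0
    rw [Complex.deriv_cos']
    simp only [norm_neg, ← Complex.ofReal_sin, Complex.norm_real, Real.norm_eq_abs, pow_zero,
      mul_one]
    have h1 : |Real.sin t| ≤ 1 := Real.abs_sin_le_one t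
    nlinarith

/-- the product rule for `jb c * w c` away from zero -/
lemma prod_deriv (w : ℕ → ℂ → ℂ) (hwanal : ∀ a : ℕ, AnalyticOnNhd ℂ (w a) {(0:ℂ)}ᶜ)
    (c : ℕ) (z : ℂ) (hz : z ≠ 0) :
    HasDerivAt (fun z : ℂ => jb c z * w c z)
      (deriv (jb c) z * w c z + jb c z * deriv (w c) z) z :=
  ((jb_anal c z hz).differentiableAt.hasDerivAt).mul
    ((hwanal c z hz).differentiableAt.hasDerivAt)

set_option maxHeartbeats 2000000 in
lemma key (w : ℕ → ℂ → ℂ)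
    (hwrec : ∀ (a : ℕ) (z : ℂ), w (a+1) z = ((a : ℂ) + 1)/z * w a z - deriv (w a) z)
    (hwD : ∀ (a : ℕ) (z : ℂ), z ≠ 0 →
      deriv (w (a+1)) z = w a z - ((a:ℂ)+1)/z * w (a+1) z)
    (hwanal : ∀ a : ℕ, AnalyticOnNhd ℂ (w a) {(0:ℂ)}ᶜ)
    (e : ℕ)
    (hwbound : ∀ a : ℕ, ∃ C : ℝ, ∀ t : ℝ, t ∈ Set.Ioc (0:ℝ) 1 →
      t ^ a * ‖w a (t:ℂ)‖ ≤ C * t ^ e ∧ t ^ (a+1) * ‖deriv (w a) (t:ℂ)‖ ≤ C * t ^ e)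
    (b : ℕ) (x : ℝ) (hx : 0 < x) :
    deriv (fun z : ℂ => jb (b+1) z * w (b+1) z) (x : ℂ)
      = -deriv (fun z : ℂ => jb b z * w b z) (x : ℂ)
          + ((4 * (b+1) : ℝ) : ℂ) / (x : ℂ) ^ (2 * (b+1) + 1)
              * ∫ t in (0:ℝ)..x,
                  (t : ℂ) ^ (2 * (b+1)) * deriv (fun z : ℂ => jb b z * w b z) (t : ℂ) := by
  -- gather bounds
  obtain ⟨C₀, hC₀⟩ := jb_bound b
  obtain ⟨C₁, hC₁⟩ := jb_bound (b+1)
  obtain ⟨D₀, hD₀⟩ := hwbound b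
  obtain ⟨D₁, hD₁⟩ := hwbound (b+1)
  set C := max (max C₀ C₁) 0 with hCdef
  set D := max (max D₀ D₁) 0 with hDdef
  have hCnn : 0 ≤ C := le_max_right _ _
  have hDnn : 0 ≤ D := le_max_right _ _
  have hbnd : ∀ t : ℝ, t ∈ Set.Ioc (0:ℝ) 1 →
      t ^ b * ‖jb b (t:ℂ)‖ ≤ C * t ∧ t ^ (b+1) * ‖jb (b+1) (t:ℂ)‖ ≤ C * t ∧
      t ^ (b+1) * ‖deriv (jb b) (t:ℂ)‖ ≤ C * t ∧
      t ^ b * ‖w b (t:ℂ)‖ ≤ D ∧ t ^ (b+1) * ‖w (b+1) (t:ℂ)‖ ≤ D ∧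
      t ^ (b+1) * ‖deriv (w b) (t:ℂ)‖ ≤ D := by
    intro t ht
    obtain ⟨ht1, ht2⟩ := ht
    have hte : t ^ e ≤ 1 := pow_le_one₀ ht1.le ht2
    have htnn : (0:ℝ) ≤ t := ht1.le
    have l1 := (hC₀ t ⟨ht1, ht2⟩).1
    have l2 := (hC₁ t ⟨ht1, ht2⟩).1
    have l3 := (hC₀ t ⟨ht1, ht2⟩).2
    have l4 := (hD₀ t ⟨ht1, ht2⟩).1
    have l5 := (hD₁ t ⟨ht1, ht2⟩).1
    have l6 := (hD₀ t ⟨ht1, ht2⟩).2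
    have hCle0 : C₀ ≤ C := le_trans (le_max_left _ _) (le_max_left _ _)
    have hCle1 : C₁ ≤ C := le_trans (le_max_right _ _) (le_max_left _ _)
    have hDle0 : D₀ ≤ D := le_trans (le_max_left _ _) (le_max_left _ _)
    have hDle1 : D₁ ≤ D := le_trans (le_max_right _ _) (le_max_left _ _)
    have hDb : ∀ X : ℝ, ∀ E : ℝ, X ≤ E * t ^ e → E ≤ D → X ≤ D := by
      intro X E h hE
      calc X ≤ E * t ^ e := h
        _ ≤ D := by nlinarith [pow_pos ht1 e]
    refine ⟨?_, ?_, ?_, hDb _ _ l4 hDle0, hDb _ _ l5 hDle1, hDb _ _ l6 hDle0⟩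
    · calc t ^ b * ‖jb b (t:ℂ)‖ ≤ C₀ * t ^ 1 := l1
        _ ≤ C * t := by rw [pow_one]; nlinarith
    · calc t ^ (b+1) * ‖jb (b+1) (t:ℂ)‖ ≤ C₁ * t ^ 1 := l2
        _ ≤ C * t := by rw [pow_one]; nlinarith
    · calc t ^ (b+1) * ‖deriv (jb b) (t:ℂ)‖ ≤ C₀ * t ^ 1 := l3
        _ ≤ C * t := by rw [pow_one]; nlinarith
  -- the antiderivative
  set F : ℝ → ℂ := fun t => (t:ℂ)^(2*(b+1))/2 *
    (jb b (t:ℂ) * w b (t:ℂ) - jb (b+1) (t:ℂ) * w (b+1) (t:ℂ)) with hFdef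
  have hxne : (x:ℂ) ≠ 0 := Complex.ofReal_ne_zero.mpr (ne_of_gt hx)
  -- derivative of F
  have hFderiv : ∀ t : ℝ, 0 < t → HasDerivAt F
      ((t:ℂ)^(2*(b+1)) * deriv (fun z : ℂ => jb b z * w b z) (t:ℂ)) t := by
    intro t ht
    have hz : (t:ℂ) ≠ 0 := Complex.ofReal_ne_zero.mpr (ne_of_gt ht)
    have hpow : HasDerivAt (fun z : ℂ => z^(2*(b+1))/2)
        (((2*(b+1) : ℕ) : ℂ) * (t:ℂ)^(2*b+1)/2) (t:ℂ) := by
      have h := (hasDerivAt_pow (2*(b+1)) ((t:ℂ))).div_const 2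
      have hexp : 2*(b+1) - 1 = 2*b+1 := by omega
      rwa [hexp] at h
    have hprodb := prod_deriv w hwanal b (t:ℂ) hz
    have hproda := prod_deriv w hwanal (b+1) (t:ℂ) hz
    have hG := (hpow.mul (hprodb.sub hproda)).comp_ofReal
    have hjbD : deriv (jb b) (t:ℂ) = ((b:ℂ)+1)/(t:ℂ) * jb b (t:ℂ) - jb (b+1) (t:ℂ) := by
      rw [jb_rec b (t:ℂ)]; ring
    have hwbD : deriv (w b) (t:ℂ) = ((b:ℂ)+1)/(t:ℂ) * w b (t:ℂ) - w (b+1) (t:ℂ) := by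
      rw [hwrec b (t:ℂ)]; ring
    have hjaD := jb_D b (t:ℂ) hz
    have hwaD := hwD b (t:ℂ) hz
    have hval : ((2*(b+1) : ℕ) : ℂ) * (t:ℂ)^(2*b+1)/2 *
          (jb b (t:ℂ) * w b (t:ℂ) - jb (b+1) (t:ℂ) * w (b+1) (t:ℂ))
        + (t:ℂ)^(2*(b+1))/2 *
          ((deriv (jb b) (t:ℂ) * w b (t:ℂ) + jb b (t:ℂ) * deriv (w b) (t:ℂ))
            - (deriv (jb (b+1)) (t:ℂ) * w (b+1) (t:ℂ)
                + jb (b+1) (t:ℂ) * deriv (w (b+1)) (t:ℂ)))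
        = (t:ℂ)^(2*(b+1)) * deriv (fun z : ℂ => jb b z * w b z) (t:ℂ) := by
      rw [hprodb.deriv, hjbD, hwbD, hjaD, hwaD]
      push_cast
      field_simp
      ring
    rw [← hval]
    exact hG
  -- continuity helper
  have hcontAux : ∀ (g : ℂ → ℂ), AnalyticOnNhd ℂ g {(0:ℂ)}ᶜ → ∀ t : ℝ, 0 < t →
      ContinuousAt (fun s : ℝ => g (s:ℂ)) t := by
    intro g hg t ht
    have hz : (t:ℂ) ∈ ({(0:ℂ)}ᶜ : Set ℂ) := by
      simp [Complex.ofReal_ne_zero.mpr (ne_of_gt ht)]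
    exact (hg _ hz).continuousAt.comp Complex.continuous_ofReal.continuousAt
  -- bound on F near 0
  have hFbound : ∀ t : ℝ, t ∈ Set.Ioc (0:ℝ) 1 → ‖F t‖ ≤ C * D * t := by
    intro t ht
    obtain ⟨ht1, ht2⟩ := ht
    obtain ⟨h1, h2, h3, h4, h5, h6⟩ := hbnd t ⟨ht1, ht2⟩
    have hnorm : ‖(t:ℂ)^(2*(b+1))/2‖ = t^(2*(b+1))/2 := by
      rw [norm_div, norm_pow, Complex.norm_real, Real.norm_eq_abs, abs_of_pos ht1]
      norm_num
    have step : ‖F t‖ ≤ t^(2*(b+1))/2 *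
        (‖jb b (t:ℂ)‖ * ‖w b (t:ℂ)‖ + ‖jb (b+1) (t:ℂ)‖ * ‖w (b+1) (t:ℂ)‖) := by
      rw [hFdef]
      simp only
      rw [norm_mul, hnorm]
      refine mul_le_mul_of_nonneg_left ?_ (by positivity)
      refine le_trans (norm_sub_le _ _) ?_
      rw [norm_mul, norm_mul]
    refine le_trans step ?_
    have htt : t * t ≤ 1 := by nlinarith
    have p1 : (t^b * ‖jb b (t:ℂ)‖) * (t^b * ‖w b (t:ℂ)‖) ≤ C*D*t := by
      calc (t^b * ‖jb b (t:ℂ)‖) * (t^b * ‖w b (t:ℂ)‖) ≤ (C*t)*D :=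
            mul_le_mul h1 h4 (by positivity) (by positivity)
        _ = C*D*t := by ring
    have p2 : (t^(b+1) * ‖jb (b+1) (t:ℂ)‖) * (t^(b+1) * ‖w (b+1) (t:ℂ)‖) ≤ C*D*t := by
      calc (t^(b+1) * ‖jb (b+1) (t:ℂ)‖) * (t^(b+1) * ‖w (b+1) (t:ℂ)‖) ≤ (C*t)*D :=
            mul_le_mul h2 h5 (by positivity) (by positivity)
        _ = C*D*t := by ring
    have b1 : (t*t) * ((t^b * ‖jb b (t:ℂ)‖) * (t^b * ‖w b (t:ℂ)‖)) ≤ C*D*t := by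
      calc (t*t) * ((t^b * ‖jb b (t:ℂ)‖) * (t^b * ‖w b (t:ℂ)‖)) ≤ 1 * (C*D*t) :=
            mul_le_mul htt p1 (by positivity) zero_le_one
        _ = C*D*t := one_mul _
    have e1 : t^(2*(b+1))/2 *
        (‖jb b (t:ℂ)‖ * ‖w b (t:ℂ)‖ + ‖jb (b+1) (t:ℂ)‖ * ‖w (b+1) (t:ℂ)‖)
        = ((t*t) * ((t^b * ‖jb b (t:ℂ)‖) * (t^b * ‖w b (t:ℂ)‖)))/2
          + ((t^(b+1) * ‖jb (b+1) (t:ℂ)‖) * (t^(b+1) * ‖w (b+1) (t:ℂ)‖))/2 := by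
      ring
    rw [e1]
    linarith
  -- bound on the integrand near 0
  have hfbound : ∀ t : ℝ, t ∈ Set.Ioc (0:ℝ) 1 →
      ‖(t:ℂ)^(2*(b+1)) * deriv (fun z : ℂ => jb b z * w b z) (t:ℂ)‖ ≤ 2*(C*D)*t := by
    intro t ht
    obtain ⟨ht1, ht2⟩ := ht
    obtain ⟨h1, h2, h3, h4, h5, h6⟩ := hbnd t ⟨ht1, ht2⟩
    have hz : (t:ℂ) ≠ 0 := Complex.ofReal_ne_zero.mpr (ne_of_gt ht1)
    have hnorm : ‖(t:ℂ)^(2*(b+1))‖ = t^(2*(b+1)) := by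
      rw [norm_pow, Complex.norm_real, Real.norm_eq_abs, abs_of_pos ht1]
    have step : ‖(t:ℂ)^(2*(b+1)) * deriv (fun z : ℂ => jb b z * w b z) (t:ℂ)‖
        ≤ t^(2*(b+1)) * (‖deriv (jb b) (t:ℂ)‖ * ‖w b (t:ℂ)‖
            + ‖jb b (t:ℂ)‖ * ‖deriv (w b) (t:ℂ)‖) := by
      rw [norm_mul, hnorm, (prod_deriv w hwanal b (t:ℂ) hz).deriv]
      refine mul_le_mul_of_nonneg_left ?_ (by positivity)
      refine le_trans (norm_add_le _ _) ?_
      rw [norm_mul, norm_mul]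
    refine le_trans step ?_
    have hCt : C*t ≤ C := by nlinarith
    have q1 : (t^(b+1) * ‖deriv (jb b) (t:ℂ)‖) * (t^b * ‖w b (t:ℂ)‖) ≤ C*D := by
      calc (t^(b+1) * ‖deriv (jb b) (t:ℂ)‖) * (t^b * ‖w b (t:ℂ)‖) ≤ (C*t)*D :=
            mul_le_mul h3 h4 (by positivity) (by positivity)
        _ ≤ C*D := mul_le_mul_of_nonneg_right hCt hDnn
    have q2 : (t^b * ‖jb b (t:ℂ)‖) * (t^(b+1) * ‖deriv (w b) (t:ℂ)‖) ≤ C*D := by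
      calc (t^b * ‖jb b (t:ℂ)‖) * (t^(b+1) * ‖deriv (w b) (t:ℂ)‖)
          ≤ (C*t) * (t^(b+1) * ‖deriv (w b) (t:ℂ)‖) :=
            mul_le_mul_of_nonneg_right h1 (by positivity)
        _ ≤ (C*t)*D := mul_le_mul_of_nonneg_left h6 (by positivity)
        _ ≤ C*D := mul_le_mul_of_nonneg_right hCt hDnn
    have b1 : t * ((t^(b+1) * ‖deriv (jb b) (t:ℂ)‖) * (t^b * ‖w b (t:ℂ)‖)) ≤ C*D*t := by
      calc t * ((t^(b+1) * ‖deriv (jb b) (t:ℂ)‖) * (t^b * ‖w b (t:ℂ)‖)) ≤ t * (C*D) :=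
            mul_le_mul_of_nonneg_left q1 ht1.le
        _ = C*D*t := by ring
    have b2 : t * ((t^b * ‖jb b (t:ℂ)‖) * (t^(b+1) * ‖deriv (w b) (t:ℂ)‖)) ≤ C*D*t := by
      calc t * ((t^b * ‖jb b (t:ℂ)‖) * (t^(b+1) * ‖deriv (w b) (t:ℂ)‖)) ≤ t * (C*D) :=
            mul_le_mul_of_nonneg_left q2 ht1.le
        _ = C*D*t := by ring
    have e1 : t^(2*(b+1)) * (‖deriv (jb b) (t:ℂ)‖ * ‖w b (t:ℂ)‖
          + ‖jb b (t:ℂ)‖ * ‖deriv (w b) (t:ℂ)‖)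
        = t * ((t^(b+1) * ‖deriv (jb b) (t:ℂ)‖) * (t^b * ‖w b (t:ℂ)‖))
          + t * ((t^b * ‖jb b (t:ℂ)‖) * (t^(b+1) * ‖deriv (w b) (t:ℂ)‖)) := by
      ring
    rw [e1]
    linarith
  -- continuity of F on [0, x]
  have htends : Tendsto (fun t : ℝ => C*D*t) (nhdsWithin 0 (Set.Icc 0 x)) (nhds 0) := by
    have h : Tendsto (fun t : ℝ => C*D*t) (nhds 0) (nhds (C*D*0)) :=
      (continuous_const.mul continuous_id).tendsto 0
    rw [mul_zero] at h
    exact h.mono_left nhdsWithin_le_nhds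
  have htends2 : Tendsto (fun t : ℝ => 2*(C*D)*t) (nhdsWithin 0 (Set.Icc 0 x)) (nhds 0) := by
    have h : Tendsto (fun t : ℝ => 2*(C*D)*t) (nhds 0) (nhds (2*(C*D)*0)) :=
      (continuous_const.mul continuous_id).tendsto 0
    rw [mul_zero] at h
    exact h.mono_left nhdsWithin_le_nhds
  have hevmem : ∀ᶠ t in nhdsWithin 0 (Set.Icc 0 x), t = 0 ∨ t ∈ Set.Ioc (0:ℝ) 1 := by
    filter_upwards [self_mem_nhdsWithin,
      mem_nhdsWithin_of_mem_nhds (isOpen_Iio.mem_nhds (show (0:ℝ) ∈ Set.Iio 1 by norm_num))]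
      with t htI htlt
    rcases eq_or_lt_of_le htI.1 with h | h
    · exact Or.inl h.symm
    · exact Or.inr ⟨h, le_of_lt htlt⟩
  have hF0 : F 0 = 0 := by
    rw [hFdef]
    simp
  have hFcont : ContinuousOn F (Set.Icc 0 x) := by
    intro t htmem
    rcases eq_or_lt_of_le htmem.1 with h | h
    · rw [← h]
      have : Tendsto F (nhdsWithin 0 (Set.Icc 0 x)) (nhds 0) := by
        apply squeeze_zero_norm' _ htends
        filter_upwards [hevmem] with t ht
        rcases ht with rfl | ht
        · rw [hF0]; simp
        · exact hFbound t ht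
      rw [ContinuousWithinAt, hF0]
      exact this
    · refine ContinuousAt.continuousWithinAt ?_
      rw [hFdef]
      refine ContinuousAt.mul ?_ ?_
      · exact ((Complex.continuous_ofReal.pow _).div_const 2).continuousAt
      · exact ((hcontAux _ (jb_anal b) t h).mul (hcontAux _ (hwanal b) t h)).sub
          ((hcontAux _ (jb_anal (b+1)) t h).mul (hcontAux _ (hwanal (b+1)) t h))
  -- continuity of the integrand on [0, x]
  have hfcont : ContinuousOn
      (fun t : ℝ => (t:ℂ)^(2*(b+1)) * deriv (fun z : ℂ => jb b z * w b z) (t:ℂ))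
      (Set.Icc 0 x) := by
    intro t htmem
    rcases eq_or_lt_of_le htmem.1 with h | h
    · rw [← h]
      have h0 : ((0:ℝ):ℂ)^(2*(b+1)) * deriv (fun z : ℂ => jb b z * w b z) ((0:ℝ):ℂ) = 0 := by
        simp
      have : Tendsto (fun t : ℝ => (t:ℂ)^(2*(b+1)) * deriv (fun z : ℂ => jb b z * w b z) (t:ℂ))
          (nhdsWithin 0 (Set.Icc 0 x)) (nhds 0) := by
        apply squeeze_zero_norm' _ htends2
        filter_upwards [hevmem] with t ht
        rcases ht with rfl | ht
        · rw [h0]; simp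
        · exact hfbound t ht
      rw [ContinuousWithinAt, h0]
      exact this
    · refine ContinuousAt.continuousWithinAt (ContinuousAt.mul ?_ ?_)
      · exact (Complex.continuous_ofReal.pow _).continuousAt
      · exact hcontAux _ (((jb_anal b).mul (hwanal b)).deriv) t h
  -- FTC
  have hfint : IntervalIntegrable
      (fun t : ℝ => (t:ℂ)^(2*(b+1)) * deriv (fun z : ℂ => jb b z * w b z) (t:ℂ))
      MeasureTheory.volume 0 x := by
    apply ContinuousOn.intervalIntegrable
    rwa [Set.uIcc_of_le hx.le]
  have hint : (∫ t in (0:ℝ)..x, (t:ℂ)^(2*(b+1)) * deriv (fun z : ℂ => jb b z * w b z) (t:ℂ))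
      = F x := by
    have h := intervalIntegral.integral_eq_sub_of_hasDeriv_right_of_le hx.le hFcont
      (fun t ht => (hFderiv t ht.1).hasDerivWithinAt) hfint
    rw [h, hF0, sub_zero]
  rw [hint]
  -- final algebra
  have hjbDx : deriv (jb b) (x:ℂ) = ((b:ℂ)+1)/(x:ℂ) * jb b (x:ℂ) - jb (b+1) (x:ℂ) := by
    rw [jb_rec b (x:ℂ)]; ring
  have hwbDx : deriv (w b) (x:ℂ) = ((b:ℂ)+1)/(x:ℂ) * w b (x:ℂ) - w (b+1) (x:ℂ) := by
    rw [hwrec b (x:ℂ)]; ring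
  have hjaDx := jb_D b (x:ℂ) hxne
  have hwaDx := hwD b (x:ℂ) hxne
  rw [(prod_deriv w hwanal (b+1) (x:ℂ) hxne).deriv, (prod_deriv w hwanal b (x:ℂ) hxne).deriv,
    hjbDx, hwbDx, hjaDx, hwaDx, hFdef]
  have hxpow : ((x:ℂ))^(2*(b+1)+1) ≠ 0 := pow_ne_zero _ hxne
  push_cast
  field_simp
  ring
/-- the reduction identities for the derivatives,
`Φ_a' = −A_a[Φ_{a−1}']`, `Ψ_a' = −A_a[Ψ_{a−1}']`, where `Φ_a = j_a²`, `Ψ_a = j_a η_a`. -/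
theorem statement14 (a : ℕ) (ha : 1 ≤ a) (x : ℝ) (hx : 0 < x) :
    deriv (fun z : ℂ => jb a z ^ 2) (x : ℂ)
      = -deriv (fun z : ℂ => jb (a - 1) z ^ 2) (x : ℂ)
          + ((4 * a : ℝ) : ℂ) / (x : ℂ) ^ (2 * a + 1)
              * ∫ t in (0:ℝ)..x,
                  (t : ℂ) ^ (2 * a) * deriv (fun z : ℂ => jb (a - 1) z ^ 2) (t : ℂ) ∧
    deriv (fun z : ℂ => jb a z * yb a z) (x : ℂ)
      = -deriv (fun z : ℂ => jb (a - 1) z * yb (a - 1) z) (x : ℂ)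
          + ((4 * a : ℝ) : ℂ) / (x : ℂ) ^ (2 * a + 1)
              * ∫ t in (0:ℝ)..x,
                  (t : ℂ) ^ (2 * a)
                    * deriv (fun z : ℂ => jb (a - 1) z * yb (a - 1) z) (t : ℂ) := by
  obtain ⟨b, rfl⟩ : ∃ b, a = b + 1 := ⟨a - 1, (Nat.succ_pred_eq_of_pos ha).symm⟩
  simp only [Nat.add_sub_cancel]
  have hcast : ((4 * ((b+1 : ℕ) : ℝ) : ℝ) : ℂ) = ((4 * ((b:ℝ)+1) : ℝ) : ℂ) := by
    push_cast; ring
  constructor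
  · have h := key jb jb_rec jb_D jb_anal 1 jb_bound b x hx
    have hsq : ∀ c : ℕ, (fun z : ℂ => jb c z ^ 2) = fun z : ℂ => jb c z * jb c z := by
      intro c; funext z; ring
    rw [hsq (b+1), hsq b, hcast]
    exact h
  · have h := key yb yb_rec yb_D yb_anal 0 yb_bound b x hx
    rw [hcast]
    exact h
end
end

section
/- Let H be a Hilbert space with an orthonormal basis (e_n)_{n∈ℕ}, and let (f_n)_{n∈ℕ} be a sequence in H such that (a) Σ_{n} ‖f_n − e_n‖² < ∞ and (b) the f_n are linearly independent, in the sense that for every k, f_k does not belong to the closed linear span of {f_j : j ≠ k}. Then (f_n)_{n∈ℕ} is a basis of H, and the map F : H → ℓ², x ↦ (⟨f_n, x⟩)_{n∈ℕ}, is a (bounded) linear isomorphism of H onto ℓ². -/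
open MeasureTheory
set_option linter.unusedSectionVars false
set_option linter.unusedVariables false

open scoped ComplexConjugate
open Filter

noncomputable section

namespace Statement17Aux

local notation "⟪" x ", " y "⟫" => @inner ℂ _ _ x y

variable {H : Type*} [NormedAddCommGroup H] [InnerProductSpace ℂ H] [CompleteSpace H]

lemma cs_tsum (a b : ℕ → ℝ) (ha : ∀ n, 0 ≤ a n) (hb : ∀ n, 0 ≤ b n)
    (hsa : Summable fun n => a n ^ 2) (hsb : Summable fun n => b n ^ 2) :
    Summable (fun n => a n * b n) ∧
    ∑' n, a n * b n ≤ Real.sqrt (∑' n, a n ^ 2) * Real.sqrt (∑' n, b n ^ 2) := by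
  have hsab : Summable fun n => a n * b n := by
    refine Summable.of_nonneg_of_le (fun n => mul_nonneg (ha n) (hb n)) (fun n => ?_)
      (((hsa.add hsb).div_const 2))
    rw [le_div_iff₀ (by norm_num : (0:ℝ) < 2)]
    calc a n * b n * 2 = 2 * a n * b n := by ring
    _ ≤ a n ^ 2 + b n ^ 2 := two_mul_le_add_sq _ _
  refine ⟨hsab, Summable.tsum_le_of_sum_le hsab fun s => ?_⟩
  refine (Real.sum_mul_le_sqrt_mul_sqrt s a b).trans ?_
  gcongr
  · exact Summable.sum_le_tsum s (fun n _ => sq_nonneg _) hsa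
  · exact Summable.sum_le_tsum s (fun n _ => sq_nonneg _) hsb


variable {e d : ℕ → H}

lemma summable_norm_smul (he : Orthonormal ℂ e) (hd : Summable fun n => ‖d n‖ ^ 2) (x : H) :
    Summable (fun n => ‖⟪e n, x⟫‖ * ‖d n‖) :=
  (cs_tsum _ _ (fun n => norm_nonneg _) (fun n => norm_nonneg _)
    (he.inner_products_summable x) hd).1

lemma summable_smul (he : Orthonormal ℂ e) (hd : Summable fun n => ‖d n‖ ^ 2) (x : H) :
    Summable (fun n => ⟪e n, x⟫ • d n) := by
  refine Summable.of_norm ?_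
  simpa [norm_smul] using summable_norm_smul he hd x

lemma norm_tsum_smul_le (he : Orthonormal ℂ e) (hd : Summable fun n => ‖d n‖ ^ 2) (x : H) :
    ‖∑' n, ⟪e n, x⟫ • d n‖ ≤ Real.sqrt (∑' n, ‖d n‖ ^ 2) * ‖x‖ := by
  have h1 : ‖∑' n, ⟪e n, x⟫ • d n‖ ≤ ∑' n, ‖⟪e n, x⟫ • d n‖ :=
    norm_tsum_le_tsum_norm (by simpa [norm_smul] using summable_norm_smul he hd x)
  refine h1.trans ?_
  have h2 : (∑' n, ‖⟪e n, x⟫ • d n‖) = ∑' n, ‖⟪e n, x⟫‖ * ‖d n‖ := by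
    simp [norm_smul]
  rw [h2]
  have h3 := (cs_tsum _ _ (fun n => norm_nonneg _) (fun n => norm_nonneg _)
    (he.inner_products_summable x) hd).2
  refine h3.trans ?_
  rw [mul_comm]
  gcongr _ * ?_
  calc Real.sqrt (∑' n, ‖⟪e n, x⟫‖ ^ 2) ≤ Real.sqrt (‖x‖ ^ 2) :=
        Real.sqrt_le_sqrt (he.tsum_inner_products_le x)
  _ = ‖x‖ := by rw [Real.sqrt_sq (norm_nonneg x)]

/-- The operator `x ↦ ∑' n, ⟪e n, x⟫ • d n`. -/
def pertOp (he : Orthonormal ℂ e) (hd : Summable fun n => ‖d n‖ ^ 2) : H →L[ℂ] H :=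
  LinearMap.mkContinuous
    { toFun := fun x => ∑' n, ⟪e n, x⟫ • d n
      map_add' := fun x y => by
        show (∑' n, ⟪e n, x + y⟫ • d n) = _
        rw [← Summable.tsum_add (summable_smul he hd x) (summable_smul he hd y)]
        exact tsum_congr fun n => by rw [inner_add_right, add_smul]
      map_smul' := fun a x => by
        simp only [RingHom.id_apply]
        show (∑' n, ⟪e n, a • x⟫ • d n) = a • ∑' n, ⟪e n, x⟫ • d n
        rw [← Summable.tsum_const_smul a (summable_smul he hd x)]
        exact tsum_congr fun n => by rw [inner_smul_right, mul_smul] }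
    (Real.sqrt (∑' n, ‖d n‖ ^ 2))
    (fun x => norm_tsum_smul_le he hd x)

lemma pertOp_apply (he : Orthonormal ℂ e) (hd : Summable fun n => ‖d n‖ ^ 2) (x : H) :
    pertOp he hd x = ∑' n, ⟪e n, x⟫ • d n := rfl

lemma pertOp_norm_le (he : Orthonormal ℂ e) (hd : Summable fun n => ‖d n‖ ^ 2) :
    ‖pertOp he hd‖ ≤ Real.sqrt (∑' n, ‖d n‖ ^ 2) :=
  LinearMap.mkContinuous_norm_le _ (Real.sqrt_nonneg _) _

lemma mem_closure_of_hasSum {g : ℕ → H} {s : H} (p : Submodule ℂ H)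
    (hg : ∀ n, g n ∈ p) (h : HasSum g s) : s ∈ p.topologicalClosure := by
  have : s ∈ closure (p : Set H) :=
    mem_closure_of_tendsto h (Filter.Eventually.of_forall fun t => p.sum_mem fun i _ => hg i)
  rwa [← Submodule.topologicalClosure_coe, SetLike.mem_coe] at this


lemma surjective_one_add_of_finiteRank (B : H →L[ℂ] H) (W : Submodule ℂ H)
    [FiniteDimensional ℂ W] (hBW : ∀ x, B x ∈ W)
    (hinj : ∀ x, x + B x = 0 → x = 0) :
    ∀ y : H, ∃ x, x + B x = y := by
  obtain ⟨φ, hφ⟩ : ∃ φ : W →ₗ[ℂ] W, ∀ w : W, (φ w : H) = (w : H) + B w :=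
    ⟨{ toFun := fun w => ⟨(w : H) + B w, W.add_mem w.2 (hBW w)⟩
       map_add' := fun w w' => by
         apply Subtype.ext
         simp only [Submodule.coe_add, map_add]
         abel
       map_smul' := fun a w => by
         apply Subtype.ext
         simp only [Submodule.coe_smul, _root_.map_smul, RingHom.id_apply, smul_add] }, fun w => rfl⟩
  have hφinj : Function.Injective φ := by
    intro w w' h
    apply Subtype.ext
    have h2 : (w : H) + B w = (w' : H) + B w' := by rw [← hφ, ← hφ, h]
    have h3 : ((w : H) - w') + B ((w : H) - (w' : H)) = 0 := by
      rw [map_sub, ← add_sub_add_comm, h2, sub_self]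
    exact sub_eq_zero.1 (hinj _ h3)
  have hφsurj := LinearMap.injective_iff_surjective.1 hφinj
  intro y
  obtain ⟨w, hw⟩ := hφsurj ⟨B y, hBW y⟩
  refine ⟨y - (w : H), ?_⟩
  have hw' : (w : H) + B w = B y := by rw [← hφ w, hw]
  rw [map_sub]
  have h4 : y - (w : H) + (B y - B w) = y + (B y - ((w : H) + B w)) := by abel
  rw [h4, hw', sub_self, add_zero]

end Statement17Aux
open Statement17Aux

set_option maxHeartbeats 1000000

/-- if `(e_n)` is an orthonormal basis of a Hilbert space `H` and `(f_n)` is a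
linearly independent sequence with `Σ ‖f_n − e_n‖² < ∞`, then `(f_n)` is a basis of `H` and
`x ↦ (⟨f_n, x⟩)_n` is a bounded linear isomorphism of `H` onto `ℓ²`. -/
theorem statement17 {H : Type*} [NormedAddCommGroup H] [InnerProductSpace ℂ H]
    [CompleteSpace H]
    (e : ℕ → H) (he : Orthonormal ℂ e)
    (he' : (Submodule.span ℂ (Set.range e)).topologicalClosure = ⊤)
    (f : ℕ → H)
    (hsum : Summable (fun n : ℕ => ‖f n - e n‖ ^ 2))
    (hfree : ∀ k : ℕ,
      f k ∉ (Submodule.span ℂ (f '' {j : ℕ | j ≠ k})).topologicalClosure) :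
    (Submodule.span ℂ (Set.range f)).topologicalClosure = ⊤ ∧
    ∃ F : H ≃L[ℂ] lp (fun _ : ℕ => ℂ) 2,
      ∀ (x : H) (n : ℕ), (F x : ∀ _ : ℕ, ℂ) n = inner ℂ (f n) x := by
  classical
  set d : ℕ → H := fun n => f n - e n with hd_def
  have hd : Summable fun n => ‖d n‖ ^ 2 := hsum
  let S : H →L[ℂ] H := pertOp he hd
  let A : H →L[ℂ] H := 1 + S
  have hAapp : ∀ x, A x = x + S x := fun x => rfl
  have hef : ∀ n, e n + d n = f n := fun n => add_sub_cancel _ _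
  -- Hilbert basis
  let b : HilbertBasis ℕ ℂ H := HilbertBasis.mk he he'.ge
  have hbe : ⇑b = e := HilbertBasis.coe_mk he he'.ge
  -- A sends e n to f n
  have hAe : ∀ n, A (e n) = f n := by
    intro n
    have h1 : S (e n) = d n := by
      rw [pertOp_apply]
      have h2 : (fun m => (inner ℂ (e m) (e n) : ℂ) • d m) = fun m => if m = n then d n else 0 := by
        funext m
        rcases eq_or_ne m n with h | h
        · subst h; simp [orthonormal_iff_ite.mp he, he.1]
        · simp [orthonormal_iff_ite.mp he, h]
      rw [h2, tsum_ite_eq]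
    rw [hAapp, h1, hef]
  -- A x is the sum of the series with coefficients of x and vectors f n
  have hAsum : ∀ x, HasSum (fun n => (inner ℂ (e n) x : ℂ) • f n) (A x) := by
    intro x
    have h1 : HasSum (fun n => (inner ℂ (e n) x : ℂ) • e n) x := by
      have h := b.hasSum_repr x
      convert h using 1
      funext m
      rw [b.repr_apply_apply, show b m = e m from congrFun hbe m]
    have h2 : HasSum (fun n => (inner ℂ (e n) x : ℂ) • d n) (S x) :=
      (summable_smul he hd x).hasSum
    have h3 := h1.add h2
    rw [← hAapp] at h3
    convert h3 using 1
    funext n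
    rw [← smul_add, hef]
  -- injectivity of A from freeness
  have hker : ∀ x, A x = 0 → x = 0 := by
    intro x hx
    by_contra hx0
    obtain ⟨k, hk⟩ : ∃ k, (inner ℂ (e k) x : ℂ) ≠ 0 := by
      by_contra hall
      push_neg at hall
      apply hx0
      have h1 : HasSum (fun n => (inner ℂ (e n) x : ℂ) • e n) x := by
        have h := b.hasSum_repr x
        convert h using 1
        funext m
        rw [b.repr_apply_apply, show b m = e m from congrFun hbe m]
      have h2 : HasSum (fun _ : ℕ => (0 : H)) x := by
        simpa only [hall, zero_smul] using h1
      exact (hasSum_zero.unique h2).symm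
    set g : ℕ → H := fun n => (inner ℂ (e n) x : ℂ) • f n with hg_def
    have hg0 : HasSum g 0 := by rw [← hx]; exact hAsum x
    have hup : HasSum (Function.update g k 0) (0 - g k + 0) := hg0.update k 0
    set p := Submodule.span ℂ (f '' {j : ℕ | j ≠ k}) with hp_def
    have hmem : ∀ n, Function.update g k 0 n ∈ p := by
      intro n
      rcases eq_or_ne n k with h | h
      · subst h; simp only [Function.update_self]; exact p.zero_mem
      · rw [Function.update_of_ne h]
        exact p.smul_mem _ (Submodule.subset_span ⟨n, h, rfl⟩)
    have hcl : (0 - g k + 0) ∈ p.topologicalClosure := mem_closure_of_hasSum p hmem hup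
    have hgk : g k ∈ p.topologicalClosure := by
      have : -g k ∈ p.topologicalClosure := by simpa using hcl
      simpa using p.topologicalClosure.neg_mem this
    have hfk : f k ∈ p.topologicalClosure := by
      have := p.topologicalClosure.smul_mem ((inner ℂ (e k) x : ℂ))⁻¹ hgk
      rwa [hg_def, smul_smul, inv_mul_cancel₀ hk, one_smul] at this
    exact hfree k hfk
  have hAinj : Function.Injective A := by
    intro x y hxy
    have : A (x - y) = 0 := by rw [map_sub, hxy, sub_self]
    exact sub_eq_zero.1 (hker _ this)
  -- choose N with small tail
  obtain ⟨N, hN⟩ : ∃ N, (∑' n, ‖d (n + N)‖ ^ 2) < 1 :=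
    ((tendsto_sum_nat_add fun n => ‖d n‖ ^ 2).eventually (gt_mem_nhds one_pos)).exists
  have he₂ : Orthonormal ℂ (fun n => e (n + N)) := he.comp _ (add_left_injective N)
  have hd₂ : Summable fun n => ‖d (n + N)‖ ^ 2 := (summable_nat_add_iff N).2 hd
  let S₂ : H →L[ℂ] H := pertOp he₂ hd₂
  let S₁ : H →L[ℂ] H :=
    ∑ n ∈ Finset.range N, ContinuousLinearMap.smulRight (innerSL ℂ (e n)) (d n)
  have hS₁app : ∀ x, S₁ x = ∑ n ∈ Finset.range N, (inner ℂ (e n) x : ℂ) • d n := by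
    intro x
    simp [S₁, ContinuousLinearMap.sum_apply]
  have hsplit : ∀ x, S x = S₁ x + S₂ x := by
    intro x
    rw [hS₁app, pertOp_apply, pertOp_apply he₂ hd₂,
      ← Summable.sum_add_tsum_nat_add N (summable_smul he hd x)]
  have hS₂norm : ‖S₂‖ < 1 := by
    refine (pertOp_norm_le he₂ hd₂).trans_lt ?_
    rw [show (1 : ℝ) = Real.sqrt 1 by rw [Real.sqrt_one]]
    exact Real.sqrt_lt_sqrt (tsum_nonneg fun n => sq_nonneg _) hN
  let u : (H →L[ℂ] H)ˣ := Units.oneSub (-S₂) (by rwa [norm_neg])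
  have huv : (↑u : H →L[ℂ] H) = 1 + S₂ := by
    rw [Units.val_oneSub, sub_neg_eq_add]
  have huu : ∀ y, (↑u : H →L[ℂ] H) ((↑u⁻¹ : H →L[ℂ] H) y) = y := by
    intro y
    calc (↑u : H →L[ℂ] H) ((↑u⁻¹ : H →L[ℂ] H) y)
        = ((↑u * ↑u⁻¹ : H →L[ℂ] H)) y := (ContinuousLinearMap.mul_apply _ _ _).symm
      _ = y := by rw [u.mul_inv]; rfl
  let B : H →L[ℂ] H := (↑u⁻¹ : H →L[ℂ] H).comp S₁
  have hA_u : ∀ x, A x = (↑u : H →L[ℂ] H) (x + B x) := by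
    intro x
    have h1 : (↑u : H →L[ℂ] H) (B x) = S₁ x := huu (S₁ x)
    rw [map_add, h1, huv, hAapp, hsplit x]
    simp only [ContinuousLinearMap.add_apply, ContinuousLinearMap.one_apply]
    abel
  let W : Submodule ℂ H :=
    Submodule.span ℂ ((fun n => (↑u⁻¹ : H →L[ℂ] H) (d n)) '' Set.Iio N)
  have : FiniteDimensional ℂ W :=
    FiniteDimensional.span_of_finite ℂ ((Set.finite_Iio N).image _)
  have hBW : ∀ x, B x ∈ W := by
    intro x
    show (↑u⁻¹ : H →L[ℂ] H) (S₁ x) ∈ W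
    rw [hS₁app, _root_.map_sum]
    refine Submodule.sum_mem _ fun n hn => ?_
    rw [_root_.map_smul]
    exact Submodule.smul_mem _ _
      (Submodule.subset_span ⟨n, Finset.mem_range.1 hn, rfl⟩)
  have hBinj : ∀ x, x + B x = 0 → x = 0 := by
    intro x hx
    exact hker x (by rw [hA_u x, hx, map_zero])
  have hBsurj := surjective_one_add_of_finiteRank B W hBW hBinj
  have hAsurj : ∀ y, ∃ x, A x = y := by
    intro y
    obtain ⟨x, hx⟩ := hBsurj ((↑u⁻¹ : H →L[ℂ] H) y)
    exact ⟨x, by rw [hA_u, hx, huu]⟩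
  -- density
  have hdense : (Submodule.span ℂ (Set.range f)).topologicalClosure = ⊤ := by
    rw [Submodule.eq_top_iff']
    intro y
    obtain ⟨x, hx⟩ := hAsurj y
    exact mem_closure_of_hasSum _
      (fun n => Submodule.smul_mem _ _ (Submodule.subset_span (Set.mem_range_self n)))
      (hx ▸ hAsum x)
  refine ⟨hdense, ?_⟩
  -- build the equivalence
  have hkerbot : LinearMap.ker (A : H →ₗ[ℂ] H) = ⊥ := (LinearMap.ker_eq_bot (f := (A : H →ₗ[ℂ] H))).2 hAinj
  have hrangetop : LinearMap.range (A : H →ₗ[ℂ] H) = ⊤ := LinearMap.range_eq_top.2 fun y => hAsurj y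
  let Aeq : H ≃L[ℂ] H := ContinuousLinearEquiv.ofBijective A hkerbot hrangetop
  have hAeq : ∀ x, Aeq x = A x := fun x =>
    DFunLike.congr_fun (ContinuousLinearEquiv.coe_ofBijective A hkerbot hrangetop) x
  let Sym : H →L[ℂ] H := (Aeq.symm : H →L[ℂ] H)
  let Aad : H →L[ℂ] H := ContinuousLinearMap.adjoint A
  let Bad : H →L[ℂ] H := ContinuousLinearMap.adjoint Sym
  have hcomp1 : A.comp Sym = ContinuousLinearMap.id ℂ H := by
    ext y
    show A (Aeq.symm y) = y
    rw [← hAeq]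
    exact Aeq.apply_symm_apply y
  have hcomp2 : Sym.comp A = ContinuousLinearMap.id ℂ H := by
    ext y
    show Aeq.symm (A y) = y
    rw [← hAeq]
    exact Aeq.symm_apply_apply y
  have h₁ : ∀ x, Bad (Aad x) = x := by
    intro x
    have : Bad.comp Aad = ContinuousLinearMap.id ℂ H := by
      rw [show Bad.comp Aad = ContinuousLinearMap.adjoint (A.comp Sym) from
        (ContinuousLinearMap.adjoint_comp A Sym).symm ▸ rfl]
      rw [hcomp1, ContinuousLinearMap.adjoint_id]
    exact DFunLike.congr_fun this x
  have h₂ : ∀ x, Aad (Bad x) = x := by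
    intro x
    have : Aad.comp Bad = ContinuousLinearMap.id ℂ H := by
      rw [show Aad.comp Bad = ContinuousLinearMap.adjoint (Sym.comp A) from
        (ContinuousLinearMap.adjoint_comp Sym A).symm ▸ rfl]
      rw [hcomp2, ContinuousLinearMap.adjoint_id]
    exact DFunLike.congr_fun this x
  let Fad : H ≃L[ℂ] H := ContinuousLinearEquiv.equivOfInverse Aad Bad h₁ h₂
  refine ⟨Fad.trans b.repr.toContinuousLinearEquiv, fun x n => ?_⟩
  show (b.repr (Aad x) : ∀ _ : ℕ, ℂ) n = inner ℂ (f n) x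
  rw [b.repr_apply_apply]
  have hbn : b n = e n := by rw [hbe]
  rw [hbn]
  rw [ContinuousLinearMap.adjoint_inner_right]
  rw [hAe n]
end
end

section
/- Fix an integer a ≥ 0. There are constants C, R such that for every real ω with |ω| ≥ R: | ∫₀¹ j_a(ω t)² dt − 1/2 | ≤ C/|ω| and | ∫₀¹ j_a(ω t) η_a(ω t) dt | ≤ C/|ω|. -/
open MeasureTheory Complex Filter intervalIntegral

noncomputable section

section Proofs18
open Polynomial
/-- polynomial pair recursion -/
def PP : ℕ → Polynomial ℂ × Polynomial ℂ
  | 0 => (1, 0)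
  | n + 1 =>
      (Polynomial.C ((n : ℂ) + 1) * X * (PP n).1 + X ^ 2 * derivative (PP n).1 + (PP n).2,
       Polynomial.C ((n : ℂ) + 1) * X * (PP n).2 + X ^ 2 * derivative (PP n).2 - (PP n).1)

lemma step_lemma (f : ℂ → ℂ) (P Q : Polynomial ℂ) (n : ℕ)
    (hrep : ∀ z : ℂ, z ≠ 0 → f z = P.eval z⁻¹ * Complex.sin z + Q.eval z⁻¹ * Complex.cos z)
    {z : ℂ} (hz : z ≠ 0) :
    ((n : ℂ) + 1) / z * f z - deriv f z =
      (Polynomial.C ((n : ℂ) + 1) * X * P + X ^ 2 * derivative P + Q).eval z⁻¹ * Complex.sin z +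
      (Polynomial.C ((n : ℂ) + 1) * X * Q + X ^ 2 * derivative Q - P).eval z⁻¹ * Complex.cos z := by
  have hw : HasDerivAt (fun w : ℂ => w⁻¹) (-(z ^ 2)⁻¹) z := hasDerivAt_inv hz
  have hP : HasDerivAt (fun w : ℂ => P.eval w⁻¹) ((derivative P).eval z⁻¹ * -(z ^ 2)⁻¹) z :=
    (P.hasDerivAt z⁻¹).comp z hw
  have hQ : HasDerivAt (fun w : ℂ => Q.eval w⁻¹) ((derivative Q).eval z⁻¹ * -(z ^ 2)⁻¹) z :=
    (Q.hasDerivAt z⁻¹).comp z hw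
  have hD : HasDerivAt (fun w : ℂ => P.eval w⁻¹ * Complex.sin w + Q.eval w⁻¹ * Complex.cos w)
      (((derivative P).eval z⁻¹ * -(z ^ 2)⁻¹) * Complex.sin z + P.eval z⁻¹ * Complex.cos z +
       (((derivative Q).eval z⁻¹ * -(z ^ 2)⁻¹) * Complex.cos z + Q.eval z⁻¹ * -Complex.sin z)) z :=
    ((hP.mul (Complex.hasDerivAt_sin z)).add (hQ.mul (Complex.hasDerivAt_cos z)))
  have heq : deriv f z =
      ((derivative P).eval z⁻¹ * -(z ^ 2)⁻¹) * Complex.sin z + P.eval z⁻¹ * Complex.cos z +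
       (((derivative Q).eval z⁻¹ * -(z ^ 2)⁻¹) * Complex.cos z + Q.eval z⁻¹ * -Complex.sin z) := by
    have hev : f =ᶠ[nhds z]
        (fun w : ℂ => P.eval w⁻¹ * Complex.sin w + Q.eval w⁻¹ * Complex.cos w) := by
      filter_upwards [isOpen_compl_singleton.mem_nhds (by simpa using hz :
        z ∈ ({0}ᶜ : Set ℂ))] with w hw'
      exact hrep w (by simpa using hw')
    rw [hev.deriv_eq]
    exact hD.deriv
  rw [heq, hrep z hz]
  simp only [Polynomial.eval_add, Polynomial.eval_sub, Polynomial.eval_mul, Polynomial.eval_pow,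
    Polynomial.eval_X, Polynomial.eval_C]
  field_simp
  ring

lemma jb_rep (a : ℕ) : ∀ z : ℂ, z ≠ 0 →
    jb a z = (PP a).1.eval z⁻¹ * Complex.sin z + (PP a).2.eval z⁻¹ * Complex.cos z := by
  induction a with
  | zero => intro z hz; simp [jb, PP]
  | succ n ih =>
      intro z hz
      have : jb (n + 1) z = ((n : ℂ) + 1) / z * jb n z - deriv (jb n) z := by
        simp [jb]
      rw [this, step_lemma (jb n) (PP n).1 (PP n).2 n ih hz]
      rfl

lemma yb_rep (a : ℕ) : ∀ z : ℂ, z ≠ 0 →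
    yb a z = (-(PP a).2).eval z⁻¹ * Complex.sin z + (PP a).1.eval z⁻¹ * Complex.cos z := by
  induction a with
  | zero => intro z hz; simp [yb, PP]
  | succ n ih =>
      intro z hz
      have h1 : yb (n + 1) z = ((n : ℂ) + 1) / z * yb n z - deriv (yb n) z := by
        simp [yb]
      rw [h1, step_lemma (yb n) (-(PP n).2) (PP n).1 n ih hz]
      have e1 : (Polynomial.C ((n : ℂ) + 1) * X * (-(PP n).2) + X ^ 2 * derivative (-(PP n).2)
          + (PP n).1) = -(PP (n+1)).2 := by
        show _ = -(Polynomial.C ((n : ℂ) + 1) * X * (PP n).2 + X ^ 2 * derivative (PP n).2 - (PP n).1)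
        simp only [derivative_neg]; ring
      have e2 : (Polynomial.C ((n : ℂ) + 1) * X * (PP n).1 + X ^ 2 * derivative (PP n).1
          - (-(PP n).2)) = (PP (n+1)).1 := by
        show _ = Polynomial.C ((n : ℂ) + 1) * X * (PP n).1 + X ^ 2 * derivative (PP n).1 + (PP n).2
        ring
      rw [e1, e2]
lemma coeff1_mul (U V : Polynomial ℂ) :
    (U * V).coeff 1 = U.coeff 0 * V.coeff 1 + U.coeff 1 * V.coeff 0 := by
  rw [Polynomial.coeff_mul, Finset.Nat.sum_antidiagonal_eq_sum_range_succ_mk]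
  simp [Finset.sum_range_succ]

lemma step_coeff0 (c : ℂ) (P Q : Polynomial ℂ) :
    (Polynomial.C c * X * P + X ^ 2 * derivative P + Q).coeff 0 = Q.coeff 0 := by
  simp [Polynomial.mul_coeff_zero]

lemma step_coeff1 (c : ℂ) (P Q : Polynomial ℂ) :
    (Polynomial.C c * X * P + X ^ 2 * derivative P + Q).coeff 1 = c * P.coeff 0 + Q.coeff 1 := by
  rw [mul_assoc, mul_comm (X ^ 2 : Polynomial ℂ) (derivative P)]
  simp [Polynomial.coeff_add, Polynomial.coeff_C_mul, Polynomial.coeff_X_mul,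
    Polynomial.coeff_mul_X_pow']

lemma PP_inv (a : ℕ) :
    (PP a).1.coeff 0 ^ 2 + (PP a).2.coeff 0 ^ 2 = 1 ∧
    (PP a).1.coeff 0 * (PP a).1.coeff 1 + (PP a).2.coeff 0 * (PP a).2.coeff 1 = 0 := by
  induction a with
  | zero => simp [PP, Polynomial.coeff_one]
  | succ n ih =>
      obtain ⟨i0, i1⟩ := ih
      have e2 : (PP (n+1)).2 = Polynomial.C ((n : ℂ) + 1) * X * (PP n).2
          + X ^ 2 * derivative (PP n).2 + (-(PP n).1) := by
        show Polynomial.C ((n : ℂ) + 1) * X * (PP n).2 + X ^ 2 * derivative (PP n).2 - (PP n).1 = _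
        ring
      have c0 : (PP (n+1)).1.coeff 0 = (PP n).2.coeff 0 := step_coeff0 _ _ _
      have c0' : (PP (n+1)).2.coeff 0 = -(PP n).1.coeff 0 := by
        rw [e2, step_coeff0]; simp
      have c1 : (PP (n+1)).1.coeff 1 = ((n : ℂ) + 1) * (PP n).1.coeff 0 + (PP n).2.coeff 1 :=
        step_coeff1 _ _ _
      have c1' : (PP (n+1)).2.coeff 1 = ((n : ℂ) + 1) * (PP n).2.coeff 0 - (PP n).1.coeff 1 := by
        rw [e2, step_coeff1]; simp; ring
      constructor
      · rw [c0, c0']; linear_combination i0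
      · rw [c0, c0', c1, c1']; linear_combination i1

lemma F_coeff0 (a : ℕ) : ((PP a).1 ^ 2 + (PP a).2 ^ 2).coeff 0 = 1 := by
  have := (PP_inv a).1
  simpa [sq, Polynomial.mul_coeff_zero] using this

lemma F_coeff1 (a : ℕ) : ((PP a).1 ^ 2 + (PP a).2 ^ 2).coeff 1 = 0 := by
  have h := (PP_inv a).2
  rw [Polynomial.coeff_add, sq, sq, coeff1_mul, coeff1_mul]
  linear_combination 2 * h

lemma exists_X_sq (U : Polynomial ℂ) (h0 : U.coeff 0 = 0) (h1 : U.coeff 1 = 0) :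
    ∃ S : Polynomial ℂ, U = X ^ 2 * S := by
  refine ⟨U.divX.divX, ?_⟩
  have e1 : X * U.divX + Polynomial.C (U.coeff 0) = U := Polynomial.X_mul_divX_add U
  have e2 : X * U.divX.divX + Polynomial.C (U.divX.coeff 0) = U.divX := Polynomial.X_mul_divX_add _
  have h0' : U.divX.coeff 0 = 0 := by rw [Polynomial.coeff_divX]; exact h1
  rw [h0', map_zero, add_zero] at e2
  rw [h0, map_zero, add_zero] at e1
  conv_lhs => rw [← e1, ← e2]
  ring

lemma poly_bound (U : Polynomial ℂ) : ∃ c : ℝ, 0 ≤ c ∧ ∀ w : ℂ, ‖w‖ ≤ 1 → ‖U.eval w‖ ≤ c := by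
  obtain ⟨c, hc⟩ := (isCompact_closedBall (0 : ℂ) 1).exists_bound_of_continuousOn
    (U.continuous.continuousOn)
  refine ⟨max c 0, le_max_right _ _, fun w hw => ?_⟩
  exact le_trans (hc w (mem_closedBall_zero_iff.mpr hw)) (le_max_left _ _)
lemma entire_dslope {f : ℂ → ℂ} (hf : Differentiable ℂ f) :
    Differentiable ℂ (dslope f 0) := by
  rw [← differentiableOn_univ]
  exact (Complex.differentiableOn_dslope (c := 0) (s := Set.univ) Filter.univ_mem).mpr
    hf.differentiableOn

lemma deriv_differentiable {f : ℂ → ℂ} (hf : Differentiable ℂ f) :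
    Differentiable ℂ (deriv f) := by
  have h2 : ContDiff ℂ 2 f := hf.contDiff
  have := (contDiff_succ_iff_deriv (n := 1)).mp h2
  exact this.2.2.differentiable one_ne_zero

lemma deriv_even {g : ℂ → ℂ} (hg : Differentiable ℂ g) (he : ∀ z, g (-z) = g z) :
    deriv g 0 = 0 := by
  have h1 : HasDerivAt (fun z : ℂ => g (-z)) (-deriv g 0) 0 := by
    have h0 : HasDerivAt g (deriv g 0) (-(0:ℂ)) := by
      simpa using (hg.differentiableAt (x := (0:ℂ))).hasDerivAt
    simpa [Function.comp_def] using h0.comp (0:ℂ) (hasDerivAt_neg (0:ℂ))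
  have h2 : (fun z : ℂ => g (-z)) = g := funext he
  rw [h2] at h1
  have h3 := h1.deriv
  linear_combination h3 / 2

lemma deriv_odd {g : ℂ → ℂ} (hg : Differentiable ℂ g) (he : ∀ z, g (-z) = g z) (z : ℂ) :
    deriv g (-z) = -deriv g z := by
  have h1 : HasDerivAt (fun w : ℂ => g (-w)) (-(deriv g (-z))) z := by
    have h0 : HasDerivAt g (deriv g (-z)) (-z) := (hg.differentiableAt).hasDerivAt
    simpa [Function.comp_def] using h0.comp z (hasDerivAt_neg z)
  rw [funext he] at h1
  have h3 := h1.deriv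
  linear_combination h3

lemma jb_entire (a : ℕ) : ∃ g : ℂ → ℂ, Differentiable ℂ g ∧ (∀ z, g (-z) = g z) ∧
    ∀ z : ℂ, z ≠ 0 → jb a z = z ^ (a + 1) * g z := by
  induction a with
  | zero =>
      refine ⟨dslope Complex.sin 0, entire_dslope Complex.differentiable_sin, ?_, ?_⟩
      · intro z
        rcases eq_or_ne z 0 with rfl | hz
        · simp
        · rw [dslope_of_ne _ hz, dslope_of_ne _ (neg_ne_zero.mpr hz)]
          simp only [slope_def_field]
          rw [Complex.sin_zero]
          rw [Complex.sin_neg]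
          simp only [sub_zero]
          field_simp
      · intro z hz
        rw [dslope_of_ne _ hz]
        simp only [slope_def_field, Complex.sin_zero]
        have : jb 0 z = Complex.sin z := rfl
        rw [this]
        field_simp
        ring
  | succ n ih =>
      obtain ⟨g, hgd, hge, hgr⟩ := ih
      have hg'd : Differentiable ℂ (deriv g) := deriv_differentiable hgd
      have hg'0 : deriv g 0 = 0 := deriv_even hgd hge
      refine ⟨fun z => -dslope (deriv g) 0 z, (entire_dslope hg'd).neg, ?_, ?_⟩
      · intro z
        rcases eq_or_ne z 0 with rfl | hz
        · simp
        · show -dslope (deriv g) 0 (-z) = -dslope (deriv g) 0 z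
          rw [dslope_of_ne _ hz, dslope_of_ne _ (neg_ne_zero.mpr hz)]
          simp only [slope_def_field, hg'0, deriv_odd hgd hge]
          simp only [sub_zero]
          field_simp
      · intro z hz
        have hD : HasDerivAt (fun w : ℂ => w ^ (n + 1) * g w)
            (((n : ℂ) + 1) * z ^ n * g z + z ^ (n + 1) * deriv g z) z := by
          have h1 : HasDerivAt (fun w : ℂ => w ^ (n + 1)) (((n : ℂ) + 1) * z ^ n) z := by
            simpa using hasDerivAt_pow (n + 1) z
          simpa [Pi.mul_def] using h1.mul (hgd.differentiableAt).hasDerivAt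
        have heq : deriv (jb n) z = ((n : ℂ) + 1) * z ^ n * g z + z ^ (n + 1) * deriv g z := by
          have hev : jb n =ᶠ[nhds z] (fun w : ℂ => w ^ (n + 1) * g w) := by
            filter_upwards [isOpen_compl_singleton.mem_nhds (by simpa using hz :
              z ∈ ({0}ᶜ : Set ℂ))] with w hw'
            exact hgr w (by simpa using hw')
          rw [hev.deriv_eq]; exact hD.deriv
        have hjb : jb (n + 1) z = ((n : ℂ) + 1) / z * jb n z - deriv (jb n) z := by simp [jb]
        show _ = z ^ (n + 1 + 1) * -dslope (deriv g) 0 z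
        rw [hjb, heq, hgr z hz, dslope_of_ne _ hz]
        simp only [slope_def_field, hg'0]
        field_simp
        ring

lemma yb_entire (a : ℕ) : ∃ h : ℂ → ℂ, Differentiable ℂ h ∧
    ∀ z : ℂ, z ≠ 0 → yb a z = h z * z ^ (-(a : ℤ)) := by
  induction a with
  | zero => exact ⟨Complex.cos, Complex.differentiable_cos, fun z hz => by simp [yb]⟩
  | succ n ih =>
      obtain ⟨h, hhd, hhr⟩ := ih
      refine ⟨fun z => (2 * (n : ℂ) + 1) * h z - z * deriv h z,
        (hhd.const_mul _).sub (differentiable_id.mul (deriv_differentiable hhd)), ?_⟩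
      intro z hz
      have hD : HasDerivAt (fun w : ℂ => h w * w ^ (-(n : ℤ)))
          (deriv h z * z ^ (-(n : ℤ)) + h z * ((-(n : ℤ)) * z ^ (-(n : ℤ) - 1))) z := by
        simpa [Pi.mul_def] using ((hhd.differentiableAt).hasDerivAt).mul (hasDerivAt_zpow (-(n : ℤ)) z (Or.inl hz))
      have heq : deriv (yb n) z =
          deriv h z * z ^ (-(n : ℤ)) + h z * ((-(n : ℤ)) * z ^ (-(n : ℤ) - 1)) := by
        have hev : yb n =ᶠ[nhds z] (fun w : ℂ => h w * w ^ (-(n : ℤ))) := by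
          filter_upwards [isOpen_compl_singleton.mem_nhds (by simpa using hz :
            z ∈ ({0}ᶜ : Set ℂ))] with w hw'
          exact hhr w (by simpa using hw')
        rw [hev.deriv_eq]; exact hD.deriv
      have hyb : yb (n + 1) z = ((n : ℂ) + 1) / z * yb n z - deriv (yb n) z := by simp [yb]
      rw [hyb, heq, hhr z hz]
      have hz1 : z ^ (-(n : ℤ)) = (z ^ n)⁻¹ := by rw [zpow_neg, zpow_natCast]
      have hzz : z ^ n * z ≠ 0 := mul_ne_zero (pow_ne_zero n hz) hz
      have hz2 : z ^ (-(n : ℤ) - 1) = (z ^ n * z)⁻¹ := by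
        rw [zpow_sub₀ hz, hz1, zpow_one, div_eq_mul_inv, mul_inv]
      have hz3 : z ^ (-((n : ℕ) + 1 : ℕ) : ℤ) = (z ^ n * z)⁻¹ := by
        push_cast
        rw [neg_add, zpow_add₀ hz, hz1, zpow_neg, zpow_one, mul_inv]
      rw [hz1, hz2, hz3]
      field_simp
      push_cast
      ring
lemma osc (U : Polynomial ℂ) (tri Tri : ℂ → ℂ) (htri : Continuous tri)
    (hder : ∀ z, HasDerivAt Tri (tri z) z) (hTb : ∀ x : ℝ, ‖Tri ((x : ℝ) : ℂ)‖ ≤ 1) :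
    ∃ K : ℝ, 0 ≤ K ∧ ∀ ω : ℝ, 2 ≤ |ω| →
      ‖∫ t in (|ω|⁻¹ : ℝ)..1, U.eval (((ω * t : ℝ) : ℂ))⁻¹ * tri (((2 * ω * t : ℝ) : ℂ))‖
        ≤ K / |ω| := by
  obtain ⟨c1, hc1, hb1⟩ := poly_bound U
  obtain ⟨c2, hc2, hb2⟩ := poly_bound (derivative U)
  refine ⟨c1 + c2, by positivity, fun ω hω => ?_⟩
  set A : ℝ := |ω| with hA
  have hω0 : (0 : ℝ) < A := lt_of_lt_of_le (by norm_num) hω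
  have hωne : ω ≠ 0 := fun h => by simp [hA, h] at hω0
  set ε : ℝ := A⁻¹ with hεdef
  have hε0 : 0 < ε := inv_pos.mpr hω0
  have hε1 : ε ≤ 1 := by rw [hεdef, inv_le_one_iff₀]; right; linarith
  have hIcc : Set.uIcc ε 1 = Set.Icc ε 1 := Set.uIcc_of_le hε1
  have key : ∀ t : ℝ, ε ≤ t → t ≤ 1 → (((ω * t : ℝ) : ℂ) ≠ 0 ∧ ‖(((ω * t : ℝ) : ℂ))⁻¹‖ ≤ 1
      ∧ 1 ≤ A * t ∧ 0 < t) := by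
    intro t ht1 ht2
    have ht0 : 0 < t := lt_of_lt_of_le hε0 ht1
    have h1 : 1 ≤ A * t := by
      have := mul_le_mul_of_nonneg_left ht1 (le_of_lt hω0)
      rw [mul_inv_cancel₀ (ne_of_gt hω0)] at this
      linarith
    have h2 : (ω * t : ℝ) ≠ 0 := mul_ne_zero hωne (ne_of_gt ht0)
    refine ⟨by exact_mod_cast Complex.ofReal_ne_zero.mpr h2, ?_, h1, ht0⟩
    rw [norm_inv]
    have h3 : ‖((ω * t : ℝ) : ℂ)‖ = A * t := by
      rw [Complex.norm_real, Real.norm_eq_abs, abs_mul, abs_of_pos ht0]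
    rw [h3, inv_le_one_iff₀]; right; exact h1
  set m : ℝ → ℂ := fun t => ((ω * t : ℝ) : ℂ) with hm
  have hmder : ∀ t : ℝ, HasDerivAt m (ω : ℂ) t := by
    intro t
    have h0 : HasDerivAt (fun t : ℝ => ω * t) ω t := by
      simpa using (hasDerivAt_id t).const_mul ω
    exact h0.ofReal_comp
  have hmc : Continuous m := Complex.continuous_ofReal.comp (continuous_const.mul continuous_id)
  have hmnorm : ∀ t : ℝ, 0 < t → ‖m t‖ = A * t := by
    intro t ht
    rw [hm]
    simp only [Complex.norm_real, Real.norm_eq_abs]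
    rw [abs_mul, abs_of_pos ht]
  set u : ℝ → ℂ := fun t => U.eval (m t)⁻¹ with hu
  set u' : ℝ → ℂ := fun t => (derivative U).eval (m t)⁻¹ * (-((m t) ^ 2)⁻¹ * (ω : ℂ)) with hu'
  set v : ℝ → ℂ := fun t => Tri (((2 * ω * t : ℝ) : ℂ)) * (2 * (ω : ℂ))⁻¹ with hv
  set v' : ℝ → ℂ := fun t => tri (((2 * ω * t : ℝ) : ℂ)) with hv'
  have h2ω : (2 * (ω : ℂ)) ≠ 0 := by simp [hωne]
  have hvder : ∀ t : ℝ, HasDerivAt v (v' t) t := by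
    intro t
    have inner : HasDerivAt (fun t : ℝ => ((2 * ω * t : ℝ) : ℂ)) ((2 * ω : ℝ) : ℂ) t := by
      have h0 : HasDerivAt (fun t : ℝ => 2 * ω * t) (2 * ω) t := by
        simpa [mul_assoc] using (hasDerivAt_id t).const_mul (2 * ω)
      exact h0.ofReal_comp
    have h1 := ((hder _).comp t inner).mul_const (2 * (ω : ℂ))⁻¹
    have h2 : v' t = tri (((2 * ω * t : ℝ) : ℂ)) * ((2 * ω : ℝ) : ℂ) * (2 * (ω : ℂ))⁻¹ := by
      rw [hv']
      push_cast
      field_simp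
      rw [mul_div_cancel_left₀ _ (Complex.ofReal_ne_zero.mpr hωne)]
    rw [h2]
    exact h1
  have huder : ∀ t ∈ Set.uIcc ε 1, HasDerivAt u (u' t) t := by
    intro t ht
    rw [hIcc] at ht
    obtain ⟨hne, -, -, -⟩ := key t ht.1 ht.2
    have hminv : HasDerivAt (fun s : ℝ => (m s)⁻¹) (-((m t) ^ 2)⁻¹ * (ω : ℂ)) t :=
      (hasDerivAt_inv hne).comp t (hmder t)
    exact (U.hasDerivAt (m t)⁻¹).comp t hminv
  have hmne : ∀ t ∈ Set.uIcc ε 1, m t ≠ 0 := by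
    intro t ht; rw [hIcc] at ht; exact (key t ht.1 ht.2).1
  have hu'c : ContinuousOn u' (Set.uIcc ε 1) := by
    apply ContinuousOn.mul
    · exact (derivative U).continuous.comp_continuousOn (hmc.continuousOn.inv₀ hmne)
    · apply ContinuousOn.mul
      · apply ContinuousOn.neg
        exact ContinuousOn.inv₀ (hmc.continuousOn.pow 2) (fun t ht => pow_ne_zero 2 (hmne t ht))
      · exact continuousOn_const
  have hv'c : Continuous v' := by
    apply htri.comp
    exact Complex.continuous_ofReal.comp (continuous_const.mul continuous_id)
  have hibp := intervalIntegral.integral_mul_deriv_eq_deriv_mul huder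
    (fun t _ => hvder t) (hu'c.intervalIntegrable) (hv'c.intervalIntegrable _ _)
  have hrw : (∫ t in ε..1, U.eval (((ω * t : ℝ) : ℂ))⁻¹ * tri (((2 * ω * t : ℝ) : ℂ)))
      = u 1 * v 1 - u ε * v ε - ∫ t in ε..1, u' t * v t := hibp
  rw [hrw]
  have hvb : ∀ t : ℝ, ‖v t‖ ≤ (2 * A)⁻¹ := by
    intro t
    have h2 : ‖(2 * (ω : ℂ))⁻¹‖ = (2 * A)⁻¹ := by
      rw [norm_inv]
      congr 1
      rw [norm_mul, Complex.norm_two, Complex.norm_real, Real.norm_eq_abs]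
    calc ‖v t‖ = ‖Tri (((2 * ω * t : ℝ) : ℂ))‖ * ‖(2 * (ω : ℂ))⁻¹‖ := norm_mul _ _
      _ ≤ 1 * (2 * A)⁻¹ := by
          rw [h2]
          exact mul_le_mul_of_nonneg_right (hTb _) (by positivity)
      _ = (2 * A)⁻¹ := one_mul _
  have hub : ∀ t : ℝ, ε ≤ t → t ≤ 1 → ‖u t‖ ≤ c1 := by
    intro t h1 h2
    exact hb1 _ (key t h1 h2).2.1
  have hbd : ‖u 1 * v 1 - u ε * v ε‖ ≤ c1 / A := by
    calc ‖u 1 * v 1 - u ε * v ε‖ ≤ ‖u 1‖ * ‖v 1‖ + ‖u ε‖ * ‖v ε‖ := by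
          exact le_trans (norm_sub_le _ _) (add_le_add (norm_mul_le _ _) (norm_mul_le _ _))
      _ ≤ c1 * (2 * A)⁻¹ + c1 * (2 * A)⁻¹ :=
          add_le_add
            (mul_le_mul (hub 1 hε1 le_rfl) (hvb 1) (norm_nonneg _) hc1)
            (mul_le_mul (hub ε le_rfl hε1) (hvb ε) (norm_nonneg _) hc1)
      _ = c1 / A := by field_simp; ring
  have hptb : ∀ t ∈ Set.uIoc ε 1, ‖u' t * v t‖ ≤ c2 / (2 * A ^ 2) * t ^ (-2 : ℤ) := by
    intro t ht
    rw [Set.uIoc_of_le hε1] at ht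
    have ht1 : ε ≤ t := le_of_lt ht.1
    have ht0 : 0 < t := lt_of_lt_of_le hε0 ht1
    obtain ⟨hne, hinv, -, -⟩ := key t ht1 ht.2
    have hu'bd : ‖u' t‖ ≤ c2 * (A / (A * t) ^ 2) := by
      rw [hu']
      have h2 : ‖-((m t) ^ 2)⁻¹ * (ω : ℂ)‖ = A / (A * t) ^ 2 := by
        rw [norm_mul, norm_neg, norm_inv, norm_pow, hmnorm t ht0, Complex.norm_real,
          Real.norm_eq_abs]
        rw [div_eq_mul_inv, mul_comm]
      calc ‖(derivative U).eval (m t)⁻¹ * (-((m t) ^ 2)⁻¹ * (ω : ℂ))‖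
          = ‖(derivative U).eval (m t)⁻¹‖ * ‖-((m t) ^ 2)⁻¹ * (ω : ℂ)‖ := norm_mul _ _
        _ ≤ c2 * (A / (A * t) ^ 2) := by
            rw [h2]
            exact mul_le_mul_of_nonneg_right (hb2 _ hinv) (by positivity)
    calc ‖u' t * v t‖ = ‖u' t‖ * ‖v t‖ := norm_mul _ _
      _ ≤ (c2 * (A / (A * t) ^ 2)) * (2 * A)⁻¹ :=
          mul_le_mul hu'bd (hvb t) (norm_nonneg _) (by positivity)
      _ = c2 / (2 * A ^ 2) * t ^ (-2 : ℤ) := by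
          have ht2 : t ^ (-2 : ℤ) = (t ^ 2)⁻¹ := by
            rw [zpow_neg]; norm_cast
          rw [ht2]
          field_simp
  have hnot : (0 : ℝ) ∉ Set.uIcc ε 1 := by
    rw [hIcc]
    intro h
    exact absurd h.1 (not_le.mpr hε0)
  have hBint : IntervalIntegrable (fun t : ℝ => c2 / (2 * A ^ 2) * t ^ (-2 : ℤ)) volume ε 1 := by
    apply ContinuousOn.intervalIntegrable
    apply ContinuousOn.mul continuousOn_const
    intro t ht
    rw [hIcc] at ht
    have : t ≠ 0 := ne_of_gt (lt_of_lt_of_le hε0 ht.1)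
    exact (continuousAt_zpow₀ t (-2) (Or.inl this)).continuousWithinAt
  have hintb : ‖∫ t in ε..1, u' t * v t‖ ≤ c2 / A := by
    have h := intervalIntegral.norm_integral_le_of_norm_le
      (f := fun t => u' t * v t) (g := fun t : ℝ => c2 / (2 * A ^ 2) * t ^ (-2 : ℤ))
      hε1 (Eventually.of_forall fun t ht => hptb t (by rwa [Set.uIoc_of_le hε1])) hBint
    have hval : (∫ t in ε..1, c2 / (2 * A ^ 2) * t ^ (-2 : ℤ))
        = c2 / (2 * A ^ 2) * (ε⁻¹ - 1) := by
      rw [intervalIntegral.integral_const_mul, integral_zpow (Or.inr ⟨by norm_num, hnot⟩)]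
      congr 1
      norm_num
      ring
    rw [hval] at h
    refine le_trans h ?_
    have hεω : ε⁻¹ = A := by rw [hεdef, inv_inv]
    rw [hεω]
    have hA1 : (1:ℝ) ≤ A := by linarith
    rw [div_mul_eq_mul_div, div_le_div_iff₀ (by positivity) hω0]
    nlinarith [hc2, hω0]
  calc ‖u 1 * v 1 - u ε * v ε - ∫ t in ε..1, u' t * v t‖
      ≤ ‖u 1 * v 1 - u ε * v ε‖ + ‖∫ t in ε..1, u' t * v t‖ := norm_sub_le _ _
    _ ≤ c1 / A + c2 / A := add_le_add hbd hintb
    _ = (c1 + c2) / A := by ring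
lemma sq_ident (p q s c S2 w : ℂ) (hsc : s ^ 2 + c ^ 2 = 1)
    (hpq : p ^ 2 + q ^ 2 = 1 + w ^ 2 * S2) :
    (p * s + q * c) ^ 2 =
      (2⁻¹ : ℂ) + 2⁻¹ * w ^ 2 * S2 + ((q ^ 2 - p ^ 2) * 2⁻¹) * (2 * c ^ 2 - 1)
        + (p * q) * (2 * s * c) := by
  linear_combination (p ^ 2 : ℂ) * hsc + 2⁻¹ * hpq

lemma prod_ident (p q s c : ℂ) (hsc : s ^ 2 + c ^ 2 = 1) :
    (p * s + q * c) * (-q * s + p * c) =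
      (p * q) * (2 * c ^ 2 - 1) + ((p ^ 2 - q ^ 2) * 2⁻¹) * (2 * s * c) := by
  linear_combination (-(p * q) : ℂ) * hsc

lemma dc_term (S : Polynomial ℂ) : ∃ K : ℝ, 0 ≤ K ∧ ∀ ω : ℝ, 2 ≤ |ω| →
    ‖∫ t in (|ω|⁻¹ : ℝ)..1,
        (2⁻¹ : ℂ) * ((((ω * t : ℝ) : ℂ))⁻¹) ^ 2 * S.eval (((ω * t : ℝ) : ℂ))⁻¹‖ ≤ K / |ω| := by
  obtain ⟨c1, hc1, hb1⟩ : ∃ c : ℝ, 0 ≤ c ∧ ∀ w : ℂ, ‖w‖ ≤ 1 → ‖S.eval w‖ ≤ c := by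
    obtain ⟨c, hc⟩ := (isCompact_closedBall (0 : ℂ) 1).exists_bound_of_continuousOn
      (S.continuous.continuousOn)
    exact ⟨max c 0, le_max_right _ _, fun w hw =>
      le_trans (hc w (mem_closedBall_zero_iff.mpr hw)) (le_max_left _ _)⟩
  refine ⟨c1, hc1, fun ω hω => ?_⟩
  set A : ℝ := |ω| with hA
  have hω0 : (0 : ℝ) < A := lt_of_lt_of_le (by norm_num) hω
  have hωne : ω ≠ 0 := fun h => by simp [hA, h] at hω0
  set ε : ℝ := A⁻¹ with hεdef
  have hε0 : 0 < ε := inv_pos.mpr hω0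
  have hε1 : ε ≤ 1 := by rw [hεdef, inv_le_one_iff₀]; right; linarith
  have hIcc : Set.uIcc ε 1 = Set.Icc ε 1 := Set.uIcc_of_le hε1
  have hptb : ∀ t ∈ Set.uIoc ε 1,
      ‖(2⁻¹ : ℂ) * ((((ω * t : ℝ) : ℂ))⁻¹) ^ 2 * S.eval (((ω * t : ℝ) : ℂ))⁻¹‖
        ≤ c1 / (2 * A ^ 2) * t ^ (-2 : ℤ) := by
    intro t ht
    rw [Set.uIoc_of_le hε1] at ht
    have ht1 : ε ≤ t := le_of_lt ht.1
    have ht0 : 0 < t := lt_of_lt_of_le hε0 ht1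
    have hAt : 1 ≤ A * t := by
      have := mul_le_mul_of_nonneg_left ht1 (le_of_lt hω0)
      rw [mul_inv_cancel₀ (ne_of_gt hω0)] at this
      linarith
    have hnorm : ‖((ω * t : ℝ) : ℂ)‖ = A * t := by
      rw [Complex.norm_real, Real.norm_eq_abs, abs_mul, abs_of_pos ht0]
    have hinv : ‖(((ω * t : ℝ) : ℂ))⁻¹‖ = (A * t)⁻¹ := by rw [norm_inv, hnorm]
    have hinv1 : ‖(((ω * t : ℝ) : ℂ))⁻¹‖ ≤ 1 := by
      rw [hinv, inv_le_one_iff₀]; right; exact hAt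
    calc ‖(2⁻¹ : ℂ) * ((((ω * t : ℝ) : ℂ))⁻¹) ^ 2 * S.eval (((ω * t : ℝ) : ℂ))⁻¹‖
        = ‖(2⁻¹ : ℂ)‖ * ‖(((ω * t : ℝ) : ℂ))⁻¹‖ ^ 2 * ‖S.eval (((ω * t : ℝ) : ℂ))⁻¹‖ := by
          rw [norm_mul, norm_mul, norm_pow]
      _ ≤ 2⁻¹ * ((A * t)⁻¹) ^ 2 * c1 := by
          rw [hinv]
          have h05 : ‖(2⁻¹ : ℂ)‖ = 2⁻¹ := by norm_num
          rw [h05]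
          exact mul_le_mul_of_nonneg_left (hb1 _ hinv1) (by positivity)
      _ = c1 / (2 * A ^ 2) * t ^ (-2 : ℤ) := by
          have ht2 : t ^ (-2 : ℤ) = (t ^ 2)⁻¹ := by rw [zpow_neg]; norm_cast
          rw [ht2, mul_inv]
          ring
  have hnot : (0 : ℝ) ∉ Set.uIcc ε 1 := by
    rw [hIcc]; intro h; exact absurd h.1 (not_le.mpr hε0)
  have hBint : IntervalIntegrable (fun t : ℝ => c1 / (2 * A ^ 2) * t ^ (-2 : ℤ)) volume ε 1 := by
    apply ContinuousOn.intervalIntegrable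
    apply ContinuousOn.mul continuousOn_const
    intro t ht
    rw [hIcc] at ht
    have : t ≠ 0 := ne_of_gt (lt_of_lt_of_le hε0 ht.1)
    exact (continuousAt_zpow₀ t (-2) (Or.inl this)).continuousWithinAt
  have h := intervalIntegral.norm_integral_le_of_norm_le
    (f := fun t => (2⁻¹ : ℂ) * ((((ω * t : ℝ) : ℂ))⁻¹) ^ 2 * S.eval (((ω * t : ℝ) : ℂ))⁻¹)
    (g := fun t : ℝ => c1 / (2 * A ^ 2) * t ^ (-2 : ℤ))
    hε1 (Eventually.of_forall fun t ht => hptb t (by rwa [Set.uIoc_of_le hε1])) hBint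
  have hval : (∫ t in ε..1, c1 / (2 * A ^ 2) * t ^ (-2 : ℤ))
      = c1 / (2 * A ^ 2) * (ε⁻¹ - 1) := by
    rw [intervalIntegral.integral_const_mul, integral_zpow (Or.inr ⟨by norm_num, hnot⟩)]
    congr 1
    norm_num
    ring
  rw [hval] at h
  refine le_trans h ?_
  have hεω : ε⁻¹ = A := by rw [hεdef, inv_inv]
  rw [hεω]
  have hA1 : (1 : ℝ) ≤ A := by linarith
  rw [div_mul_eq_mul_div, div_le_div_iff₀ (by positivity) hω0]
  nlinarith [hc1, hω0]
lemma cont_bound (f : ℂ → ℂ) (hf : Continuous f) :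
    ∃ c : ℝ, 0 ≤ c ∧ ∀ z : ℂ, ‖z‖ ≤ 1 → ‖f z‖ ≤ c := by
  obtain ⟨c, hc⟩ := (isCompact_closedBall (0 : ℂ) 1).exists_bound_of_continuousOn
    (hf.continuousOn)
  exact ⟨max c 0, le_max_right _ _, fun w hw =>
    le_trans (hc w (mem_closedBall_zero_iff.mpr hw)) (le_max_left _ _)⟩

lemma main_aux (a : ℕ)
    (g : ℂ → ℂ) (hgd : Differentiable ℂ g)
    (h : ℂ → ℂ) (hhd : Differentiable ℂ h)
    (P Q S : Polynomial ℂ)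
    (jb yb : ℕ → ℂ → ℂ)
    (hgr : ∀ z : ℂ, z ≠ 0 → jb a z = z ^ (a + 1) * g z)
    (hhr : ∀ z : ℂ, z ≠ 0 → yb a z = h z * z ^ (-(a : ℤ)))
    (hjrep : ∀ z : ℂ, z ≠ 0 → jb a z = P.eval z⁻¹ * Complex.sin z + Q.eval z⁻¹ * Complex.cos z)
    (hyrep : ∀ z : ℂ, z ≠ 0 → yb a z = (-Q).eval z⁻¹ * Complex.sin z + P.eval z⁻¹ * Complex.cos z)
    (hSid : P ^ 2 + Q ^ 2 = 1 + X ^ 2 * S)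
    (sq_ident : ∀ p q s c S2 w : ℂ, s ^ 2 + c ^ 2 = 1 → p ^ 2 + q ^ 2 = 1 + w ^ 2 * S2 →
      (p * s + q * c) ^ 2 =
        (2⁻¹ : ℂ) + 2⁻¹ * w ^ 2 * S2 + ((q ^ 2 - p ^ 2) * 2⁻¹) * (2 * c ^ 2 - 1)
          + (p * q) * (2 * s * c))
    (prod_ident : ∀ p q s c : ℂ, s ^ 2 + c ^ 2 = 1 →
      (p * s + q * c) * (-q * s + p * c) =
        (p * q) * (2 * c ^ 2 - 1) + ((p ^ 2 - q ^ 2) * 2⁻¹) * (2 * s * c))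
    (osc : ∀ (U : Polynomial ℂ) (tri Tri : ℂ → ℂ), Continuous tri →
      (∀ z, HasDerivAt Tri (tri z) z) → (∀ x : ℝ, ‖Tri ((x : ℝ) : ℂ)‖ ≤ 1) →
      ∃ K : ℝ, 0 ≤ K ∧ ∀ ω : ℝ, 2 ≤ |ω| →
        ‖∫ t in (|ω|⁻¹ : ℝ)..1, U.eval (((ω * t : ℝ) : ℂ))⁻¹ * tri (((2 * ω * t : ℝ) : ℂ))‖
          ≤ K / |ω|)
    (dc_term : ∀ S : Polynomial ℂ, ∃ K : ℝ, 0 ≤ K ∧ ∀ ω : ℝ, 2 ≤ |ω| →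
      ‖∫ t in (|ω|⁻¹ : ℝ)..1,
          (2⁻¹ : ℂ) * ((((ω * t : ℝ) : ℂ))⁻¹) ^ 2 * S.eval (((ω * t : ℝ) : ℂ))⁻¹‖ ≤ K / |ω|) :
    ∃ C R : ℝ, 0 < C ∧ 0 < R ∧
      ∀ ω : ℝ, R ≤ |ω| →
        ‖(∫ t in (0:ℝ)..1, jb a ((ω * t : ℝ) : ℂ) ^ 2) - (1/2 : ℂ)‖ ≤ C / |ω| ∧
        ‖∫ t in (0:ℝ)..1, jb a ((ω * t : ℝ) : ℂ) * yb a ((ω * t : ℝ) : ℂ)‖ ≤ C / |ω| := by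
  obtain ⟨Mg, hMg0, hMg⟩ := cont_bound g hgd.continuous
  obtain ⟨Mh, hMh0, hMh⟩ := cont_bound h hhd.continuous
  have hsinT : ∀ x : ℝ, ‖Complex.sin ((x : ℝ) : ℂ)‖ ≤ 1 := by
    intro x
    rw [← Complex.ofReal_sin, Complex.norm_real, Real.norm_eq_abs]
    exact abs_le.mpr ⟨Real.neg_one_le_sin x, Real.sin_le_one x⟩
  have hcosT : ∀ x : ℝ, ‖-Complex.cos ((x : ℝ) : ℂ)‖ ≤ 1 := by
    intro x
    rw [norm_neg, ← Complex.ofReal_cos, Complex.norm_real, Real.norm_eq_abs]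
    exact abs_le.mpr ⟨Real.neg_one_le_cos x, Real.cos_le_one x⟩
  have hsinD : ∀ z : ℂ, HasDerivAt Complex.sin (Complex.cos z) z :=
    fun z => Complex.hasDerivAt_sin z
  have hcosD : ∀ z : ℂ, HasDerivAt (fun z => -Complex.cos z) (Complex.sin z) z := by
    intro z
    simpa [Pi.neg_def] using (Complex.hasDerivAt_cos z).neg
  obtain ⟨K1, hK10, hK1⟩ := osc ((Q ^ 2 - P ^ 2) * Polynomial.C (2⁻¹ : ℂ))
    Complex.cos Complex.sin Complex.continuous_cos hsinD hsinT
  obtain ⟨K2, hK20, hK2⟩ := osc (P * Q) Complex.sin (fun z => -Complex.cos z)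
    Complex.continuous_sin hcosD hcosT
  obtain ⟨K3, hK30, hK3⟩ := osc (P * Q)
    Complex.cos Complex.sin Complex.continuous_cos hsinD hsinT
  obtain ⟨K4, hK40, hK4⟩ := osc ((P ^ 2 - Q ^ 2) * Polynomial.C (2⁻¹ : ℂ))
    Complex.sin (fun z => -Complex.cos z) Complex.continuous_sin hcosD hcosT
  obtain ⟨K5, hK50, hK5⟩ := dc_term S
  refine ⟨Mg ^ 2 + Mg * Mh + 2⁻¹ + K1 + K2 + K3 + K4 + K5 + 1, 2, by positivity, by norm_num,
    fun ω hω => ?_⟩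
  set A : ℝ := |ω| with hA
  have hω0 : (0 : ℝ) < A := lt_of_lt_of_le (by norm_num) hω
  have hωne : ω ≠ 0 := fun hh => by simp [hA, hh] at hω0
  set ε : ℝ := A⁻¹ with hεdef
  have hε0 : 0 < ε := inv_pos.mpr hω0
  have hε1 : ε ≤ 1 := by rw [hεdef, inv_le_one_iff₀]; right; linarith
  have hAε : A * ε = 1 := mul_inv_cancel₀ (ne_of_gt hω0)
  -- basic membership facts
  have hne : ∀ t : ℝ, 0 < t → ((ω * t : ℝ) : ℂ) ≠ 0 := by
    intro t ht
    exact_mod_cast Complex.ofReal_ne_zero.mpr (mul_ne_zero hωne (ne_of_gt ht))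
  have hnorm : ∀ t : ℝ, 0 < t → ‖((ω * t : ℝ) : ℂ)‖ = A * t := by
    intro t ht
    rw [Complex.norm_real, Real.norm_eq_abs, abs_mul, abs_of_pos ht]
  have hinvle : ∀ t : ℝ, ε ≤ t → t ≤ 1 → ‖(((ω * t : ℝ) : ℂ))⁻¹‖ ≤ 1 := by
    intro t h1 h2
    have ht0 : 0 < t := lt_of_lt_of_le hε0 h1
    rw [norm_inv, hnorm t ht0, inv_le_one_iff₀]
    right
    calc (1:ℝ) = A * ε := hAε.symm
      _ ≤ A * t := by gcongr
  have hmc : Continuous (fun t : ℝ => ((ω * t : ℝ) : ℂ)) :=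
    Complex.continuous_ofReal.comp (continuous_const.mul continuous_id)
  have hmcon : ∀ V : Polynomial ℂ, ContinuousOn
      (fun t : ℝ => V.eval (((ω * t : ℝ) : ℂ))⁻¹) (Set.uIcc ε 1) := by
    intro V
    apply V.continuous.comp_continuousOn
    apply ContinuousOn.inv₀ hmc.continuousOn
    intro t ht
    rw [Set.uIcc_of_le hε1] at ht
    exact hne t (lt_of_lt_of_le hε0 ht.1)
  have hc2 : Continuous (fun t : ℝ => Complex.cos ((2 * ω * t : ℝ) : ℂ)) :=
    Complex.continuous_cos.comp (Complex.continuous_ofReal.comp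
      (continuous_const.mul continuous_id))
  have hs2 : Continuous (fun t : ℝ => Complex.sin ((2 * ω * t : ℝ) : ℂ)) :=
    Complex.continuous_sin.comp (Complex.continuous_ofReal.comp
      (continuous_const.mul continuous_id))
  -- the model functions
  set Jf : ℝ → ℂ := fun t => (((ω * t : ℝ) : ℂ)) ^ (a + 1) * g ((ω * t : ℝ) : ℂ) with hJf
  have hJc : Continuous Jf := (hmc.pow _).mul (hgd.continuous.comp hmc)
  set Gf : ℝ → ℂ := fun t => (((ω * t : ℝ) : ℂ)) * (g ((ω * t : ℝ) : ℂ) * h ((ω * t : ℝ) : ℂ))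
    with hGf
  have hGc : Continuous Gf := hmc.mul ((hgd.continuous.comp hmc).mul (hhd.continuous.comp hmc))
  -- small-interval bounds
  have hJsmall : ∀ t ∈ Set.uIoc (0:ℝ) ε, ‖(Jf t) ^ 2‖ ≤ Mg ^ 2 := by
    intro t ht
    rw [Set.uIoc_of_le (le_of_lt hε0)] at ht
    have ht0 : 0 < t := ht.1
    have hz1 : ‖((ω * t : ℝ) : ℂ)‖ ≤ 1 := by
      rw [hnorm t ht0]
      calc A * t ≤ A * ε := by gcongr; exact ht.2
        _ = 1 := hAε
    have hJb : ‖Jf t‖ ≤ Mg := by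
      rw [hJf]
      calc ‖(((ω * t : ℝ) : ℂ)) ^ (a + 1) * g ((ω * t : ℝ) : ℂ)‖
          = ‖((ω * t : ℝ) : ℂ)‖ ^ (a + 1) * ‖g ((ω * t : ℝ) : ℂ)‖ := by
            rw [norm_mul, norm_pow]
        _ ≤ 1 * Mg := by
            apply mul_le_mul (pow_le_one₀ (norm_nonneg _) hz1) (hMg _ hz1) (norm_nonneg _)
            norm_num
        _ = Mg := one_mul _
    calc ‖(Jf t) ^ 2‖ = ‖Jf t‖ ^ 2 := norm_pow _ _
      _ ≤ Mg ^ 2 := by gcongr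
  have hGsmall : ∀ t ∈ Set.uIoc (0:ℝ) ε, ‖Gf t‖ ≤ Mg * Mh := by
    intro t ht
    rw [Set.uIoc_of_le (le_of_lt hε0)] at ht
    have ht0 : 0 < t := ht.1
    have hz1 : ‖((ω * t : ℝ) : ℂ)‖ ≤ 1 := by
      rw [hnorm t ht0]
      calc A * t ≤ A * ε := by gcongr; exact ht.2
        _ = 1 := hAε
    rw [hGf]
    calc ‖(((ω * t : ℝ) : ℂ)) * (g ((ω * t : ℝ) : ℂ) * h ((ω * t : ℝ) : ℂ))‖
        = ‖((ω * t : ℝ) : ℂ)‖ * (‖g ((ω * t : ℝ) : ℂ)‖ * ‖h ((ω * t : ℝ) : ℂ)‖) := by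
          rw [norm_mul, norm_mul]
      _ ≤ 1 * (Mg * Mh) := by
          apply mul_le_mul hz1 ?_ (by positivity) (by norm_num)
          exact mul_le_mul (hMg _ hz1) (hMh _ hz1) (norm_nonneg _) hMg0
      _ = Mg * Mh := one_mul _
  -- pieces of the main-interval integrand
  set f1 : ℝ → ℂ := fun _ : ℝ => (2⁻¹ : ℂ) with hf1
  set f2 : ℝ → ℂ := fun t =>
    (2⁻¹ : ℂ) * ((((ω * t : ℝ) : ℂ))⁻¹) ^ 2 * S.eval (((ω * t : ℝ) : ℂ))⁻¹ with hf2
  set f3 : ℝ → ℂ := fun t =>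
    ((Q ^ 2 - P ^ 2) * Polynomial.C (2⁻¹ : ℂ)).eval (((ω * t : ℝ) : ℂ))⁻¹ *
      Complex.cos ((2 * ω * t : ℝ) : ℂ) with hf3
  set f4 : ℝ → ℂ := fun t =>
    (P * Q).eval (((ω * t : ℝ) : ℂ))⁻¹ * Complex.sin ((2 * ω * t : ℝ) : ℂ) with hf4
  set f3' : ℝ → ℂ := fun t =>
    (P * Q).eval (((ω * t : ℝ) : ℂ))⁻¹ * Complex.cos ((2 * ω * t : ℝ) : ℂ) with hf3'
  set f4' : ℝ → ℂ := fun t =>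
    ((P ^ 2 - Q ^ 2) * Polynomial.C (2⁻¹ : ℂ)).eval (((ω * t : ℝ) : ℂ))⁻¹ *
      Complex.sin ((2 * ω * t : ℝ) : ℂ) with hf4'
  have hi1 : IntervalIntegrable f1 volume ε 1 := by rw [hf1]; exact intervalIntegrable_const
  have hi2 : IntervalIntegrable f2 volume ε 1 := by
    apply ContinuousOn.intervalIntegrable
    have : ∀ t : ℝ, f2 t = (Polynomial.C (2⁻¹ : ℂ) * X ^ 2 * S).eval (((ω * t : ℝ) : ℂ))⁻¹ := by
      intro t; rw [hf2]; simp [Polynomial.eval_mul, Polynomial.eval_pow]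
    rw [funext this]
    exact hmcon _
  have hi3 : IntervalIntegrable f3 volume ε 1 :=
    ((hmcon _).mul hc2.continuousOn).intervalIntegrable
  have hi4 : IntervalIntegrable f4 volume ε 1 :=
    ((hmcon _).mul hs2.continuousOn).intervalIntegrable
  have hi3' : IntervalIntegrable f3' volume ε 1 :=
    ((hmcon _).mul hc2.continuousOn).intervalIntegrable
  have hi4' : IntervalIntegrable f4' volume ε 1 :=
    ((hmcon _).mul hs2.continuousOn).intervalIntegrable
  -- trig identities for t in the main interval
  have htrig : ∀ t : ℝ, 0 < t →
      Complex.cos ((2 * ω * t : ℝ) : ℂ) = 2 * Complex.cos (((ω * t : ℝ) : ℂ)) ^ 2 - 1 ∧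
      Complex.sin ((2 * ω * t : ℝ) : ℂ)
        = 2 * Complex.sin (((ω * t : ℝ) : ℂ)) * Complex.cos (((ω * t : ℝ) : ℂ)) := by
    intro t ht
    have h2z : ((2 * ω * t : ℝ) : ℂ) = 2 * ((ω * t : ℝ) : ℂ) := by push_cast; ring
    rw [h2z, Complex.cos_two_mul, Complex.sin_two_mul]
    exact ⟨rfl, rfl⟩
  -- pointwise identity on the main interval for jb²
  have hptJ : ∀ t ∈ Set.uIoc ε 1, (Jf t) ^ 2 = f1 t + f2 t + f3 t + f4 t := by
    intro t ht
    rw [Set.uIoc_of_le hε1] at ht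
    have ht0 : 0 < t := lt_of_lt_of_le hε0 (le_of_lt ht.1)
    have hz : ((ω * t : ℝ) : ℂ) ≠ 0 := hne t ht0
    have hJ : Jf t = jb a ((ω * t : ℝ) : ℂ) := (hgr _ hz).symm
    rw [hJ, hjrep _ hz]
    set w : ℂ := (((ω * t : ℝ) : ℂ))⁻¹
    have hpq : (P.eval w) ^ 2 + (Q.eval w) ^ 2 = 1 + w ^ 2 * S.eval w := by
      have := congrArg (Polynomial.eval w) hSid
      simpa using this
    have hid := sq_ident (P.eval w) (Q.eval w) (Complex.sin (((ω * t : ℝ) : ℂ)))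
      (Complex.cos (((ω * t : ℝ) : ℂ))) (S.eval w) w (Complex.sin_sq_add_cos_sq _) hpq
    rw [hid]
    simp only [hf1, hf2, hf3, hf4]
    obtain ⟨hc, hs⟩ := htrig t ht0
    rw [hc, hs]
    simp only [Polynomial.eval_mul, Polynomial.eval_sub, Polynomial.eval_pow, Polynomial.eval_C]
    try ring
  -- pointwise identity for jb * yb
  have hptG : ∀ t ∈ Set.uIoc ε 1, Gf t = f3' t + f4' t := by
    intro t ht
    rw [Set.uIoc_of_le hε1] at ht
    have ht0 : 0 < t := lt_of_lt_of_le hε0 (le_of_lt ht.1)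
    have hz : ((ω * t : ℝ) : ℂ) ≠ 0 := hne t ht0
    have hG : Gf t = jb a ((ω * t : ℝ) : ℂ) * yb a ((ω * t : ℝ) : ℂ) := by
      rw [hgr _ hz, hhr _ hz, hGf]
      have hzz : (((ω * t : ℝ) : ℂ)) ^ (a + 1) * (((ω * t : ℝ) : ℂ)) ^ (-(a : ℤ))
          = ((ω * t : ℝ) : ℂ) := by
        have hpz : (((ω * t : ℝ) : ℂ)) ^ a ≠ 0 := pow_ne_zero _ hz
        rw [zpow_neg, zpow_natCast, pow_succ, mul_comm ((((ω * t : ℝ) : ℂ)) ^ a) _, mul_assoc,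
          mul_inv_cancel₀ hpz, mul_one]
      calc ((ω * t : ℝ) : ℂ) * (g _ * h _)
          = ((((ω * t : ℝ) : ℂ)) ^ (a + 1) * (((ω * t : ℝ) : ℂ)) ^ (-(a : ℤ))) * (g _ * h _) := by
            rw [hzz]
        _ = (((ω * t : ℝ) : ℂ)) ^ (a + 1) * g _ * (h _ * (((ω * t : ℝ) : ℂ)) ^ (-(a : ℤ))) := by
            ring
    rw [hG, hjrep _ hz, hyrep _ hz]
    set w : ℂ := (((ω * t : ℝ) : ℂ))⁻¹
    have hev : (-Q).eval w = -(Q.eval w) := by simp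
    rw [hev]
    have hid := prod_ident (P.eval w) (Q.eval w) (Complex.sin (((ω * t : ℝ) : ℂ)))
      (Complex.cos (((ω * t : ℝ) : ℂ))) (Complex.sin_sq_add_cos_sq _)
    have harr : (P.eval w * Complex.sin (((ω * t : ℝ) : ℂ))
        + Q.eval w * Complex.cos (((ω * t : ℝ) : ℂ))) *
        (-(Q.eval w) * Complex.sin (((ω * t : ℝ) : ℂ))
          + P.eval w * Complex.cos (((ω * t : ℝ) : ℂ)))
        = (P.eval w) * (Q.eval w) * (2 * Complex.cos (((ω * t : ℝ) : ℂ)) ^ 2 - 1)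
          + (((P.eval w) ^ 2 - (Q.eval w) ^ 2) * 2⁻¹)
            * (2 * Complex.sin (((ω * t : ℝ) : ℂ)) * Complex.cos (((ω * t : ℝ) : ℂ))) := by
      rw [← hid]; try ring
    rw [harr]
    simp only [hf3', hf4']
    obtain ⟨hc, hs⟩ := htrig t ht0
    rw [hc, hs]
    simp only [Polynomial.eval_mul, Polynomial.eval_sub, Polynomial.eval_pow, Polynomial.eval_C]
    try ring
  -- rewrite whole integrals
  have hrw1 : (∫ t in (0:ℝ)..1, jb a ((ω * t : ℝ) : ℂ) ^ 2) = ∫ t in (0:ℝ)..1, (Jf t) ^ 2 := by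
    apply intervalIntegral.integral_congr_ae
    apply Eventually.of_forall
    intro t ht
    rw [Set.uIoc_of_le (by norm_num : (0:ℝ) ≤ 1)] at ht
    rw [hgr _ (hne t ht.1)]
  have hrw2 : (∫ t in (0:ℝ)..1, jb a ((ω * t : ℝ) : ℂ) * yb a ((ω * t : ℝ) : ℂ))
      = ∫ t in (0:ℝ)..1, Gf t := by
    apply intervalIntegral.integral_congr_ae
    apply Eventually.of_forall
    intro t ht
    rw [Set.uIoc_of_le (by norm_num : (0:ℝ) ≤ 1)] at ht
    have hz := hne t ht.1
    rw [hgr _ hz, hhr _ hz, hGf]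
    have hzz : (((ω * t : ℝ) : ℂ)) ^ (a + 1) * (((ω * t : ℝ) : ℂ)) ^ (-(a : ℤ))
        = ((ω * t : ℝ) : ℂ) := by
      have hpz : (((ω * t : ℝ) : ℂ)) ^ a ≠ 0 := pow_ne_zero _ hz
      rw [zpow_neg, zpow_natCast, pow_succ, mul_comm ((((ω * t : ℝ) : ℂ)) ^ a) _, mul_assoc,
        mul_inv_cancel₀ hpz, mul_one]
    calc (((ω * t : ℝ) : ℂ)) ^ (a + 1) * g _ * (h _ * (((ω * t : ℝ) : ℂ)) ^ (-(a : ℤ)))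
        = ((((ω * t : ℝ) : ℂ)) ^ (a + 1) * (((ω * t : ℝ) : ℂ)) ^ (-(a : ℤ))) * (g _ * h _) := by
          ring
      _ = ((ω * t : ℝ) : ℂ) * (g _ * h _) := by rw [hzz]
  -- splitting at ε
  have hsplitJ : (∫ t in (0:ℝ)..1, (Jf t) ^ 2)
      = (∫ t in (0:ℝ)..ε, (Jf t) ^ 2) + ∫ t in ε..1, (Jf t) ^ 2 :=
    (intervalIntegral.integral_add_adjacent_intervals
      ((hJc.pow 2).intervalIntegrable _ _) ((hJc.pow 2).intervalIntegrable _ _)).symm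
  have hsplitG : (∫ t in (0:ℝ)..1, Gf t) = (∫ t in (0:ℝ)..ε, Gf t) + ∫ t in ε..1, Gf t :=
    (intervalIntegral.integral_add_adjacent_intervals
      (hGc.intervalIntegrable _ _) (hGc.intervalIntegrable _ _)).symm
  -- main interval: replace with the pieces
  have hmainJ : (∫ t in ε..1, (Jf t) ^ 2)
      = (∫ t in ε..1, f1 t) + (∫ t in ε..1, f2 t)
        + (∫ t in ε..1, f3 t) + ∫ t in ε..1, f4 t := by
    have hstep : (∫ t in ε..1, (Jf t) ^ 2) = ∫ t in ε..1, (f1 t + f2 t + f3 t + f4 t) :=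
      intervalIntegral.integral_congr_ae (Eventually.of_forall hptJ)
    rw [hstep, intervalIntegral.integral_add ((hi1.add hi2).add hi3) hi4,
      intervalIntegral.integral_add (hi1.add hi2) hi3,
      intervalIntegral.integral_add hi1 hi2]
  have hmainG : (∫ t in ε..1, Gf t) = (∫ t in ε..1, f3' t) + ∫ t in ε..1, f4' t := by
    rw [← intervalIntegral.integral_add hi3' hi4']
    apply intervalIntegral.integral_congr_ae
    exact Eventually.of_forall hptG
  have hconst : (∫ t in ε..1, f1 t) = ((1 - ε : ℝ) : ℂ) * 2⁻¹ := by
    rw [hf1, intervalIntegral.integral_const, Complex.real_smul]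
  -- norm bounds on the pieces
  have hb2 : ‖∫ t in ε..1, f2 t‖ ≤ K5 / A := hK5 ω hω
  have hb3 : ‖∫ t in ε..1, f3 t‖ ≤ K1 / A := hK1 ω hω
  have hb4 : ‖∫ t in ε..1, f4 t‖ ≤ K2 / A := hK2 ω hω
  have hb3' : ‖∫ t in ε..1, f3' t‖ ≤ K3 / A := hK3 ω hω
  have hb4' : ‖∫ t in ε..1, f4' t‖ ≤ K4 / A := hK4 ω hω
  have hbJsmall : ‖∫ t in (0:ℝ)..ε, (Jf t) ^ 2‖ ≤ Mg ^ 2 / A := by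
    have := intervalIntegral.norm_integral_le_of_norm_le_const hJsmall
    rw [sub_zero, _root_.abs_of_pos hε0] at this
    calc ‖∫ t in (0:ℝ)..ε, (Jf t) ^ 2‖ ≤ Mg ^ 2 * ε := this
      _ = Mg ^ 2 / A := by rw [hεdef]; ring
  have hbGsmall : ‖∫ t in (0:ℝ)..ε, Gf t‖ ≤ Mg * Mh / A := by
    have := intervalIntegral.norm_integral_le_of_norm_le_const hGsmall
    rw [sub_zero, _root_.abs_of_pos hε0] at this
    calc ‖∫ t in (0:ℝ)..ε, Gf t‖ ≤ Mg * Mh * ε := this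
      _ = Mg * Mh / A := by rw [hεdef]; ring
  have hεnorm : ‖((ε : ℝ) : ℂ) * 2⁻¹‖ = ε * 2⁻¹ := by
    rw [norm_mul, Complex.norm_real, Real.norm_eq_abs, _root_.abs_of_pos hε0]
    norm_num
  constructor
  · -- first integral
    rw [hrw1, hsplitJ, hmainJ, hconst]
    have e1 : (∫ t in (0:ℝ)..ε, (Jf t) ^ 2) + (((1 - ε : ℝ) : ℂ) * 2⁻¹ + (∫ t in ε..1, f2 t)
        + (∫ t in ε..1, f3 t) + ∫ t in ε..1, f4 t) - (1/2 : ℂ)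
        = (∫ t in (0:ℝ)..ε, (Jf t) ^ 2) + (-(((ε : ℝ) : ℂ) * 2⁻¹)) + (∫ t in ε..1, f2 t)
          + (∫ t in ε..1, f3 t) + ∫ t in ε..1, f4 t := by
      push_cast
      ring
    rw [e1]
    calc ‖(∫ t in (0:ℝ)..ε, (Jf t) ^ 2) + (-(((ε : ℝ) : ℂ) * 2⁻¹)) + (∫ t in ε..1, f2 t)
          + (∫ t in ε..1, f3 t) + ∫ t in ε..1, f4 t‖
        ≤ ‖(∫ t in (0:ℝ)..ε, (Jf t) ^ 2)‖ + ‖(((ε : ℝ) : ℂ) * 2⁻¹)‖ + ‖∫ t in ε..1, f2 t‖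
          + ‖∫ t in ε..1, f3 t‖ + ‖∫ t in ε..1, f4 t‖ := by
          refine le_trans (norm_add_le _ _) (add_le_add ?_ le_rfl)
          refine le_trans (norm_add_le _ _) (add_le_add ?_ le_rfl)
          refine le_trans (norm_add_le _ _) (add_le_add ?_ le_rfl)
          refine le_trans (norm_add_le _ _) (add_le_add le_rfl ?_)
          rw [norm_neg]
      _ ≤ Mg ^ 2 / A + 2⁻¹ / A + K5 / A + K1 / A + K2 / A := by
          refine add_le_add (add_le_add (add_le_add (add_le_add hbJsmall ?_) hb2) hb3) hb4
          rw [hεnorm, hεdef]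
          calc A⁻¹ * 2⁻¹ = 2⁻¹ / A := by ring
            _ ≤ 2⁻¹ / A := le_rfl
      _ = (Mg ^ 2 + 2⁻¹ + K5 + K1 + K2) / A := by ring
      _ ≤ (Mg ^ 2 + Mg * Mh + 2⁻¹ + K1 + K2 + K3 + K4 + K5 + 1) / A := by
          refine (div_le_div_iff_of_pos_right hω0).mpr ?_
          linarith [mul_nonneg hMg0 hMh0, hK30, hK40]
  · -- second integral
    rw [hrw2, hsplitG, hmainG]
    calc ‖(∫ t in (0:ℝ)..ε, Gf t) + ((∫ t in ε..1, f3' t) + ∫ t in ε..1, f4' t)‖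
        ≤ ‖∫ t in (0:ℝ)..ε, Gf t‖ + (‖∫ t in ε..1, f3' t‖ + ‖∫ t in ε..1, f4' t‖) :=
          le_trans (norm_add_le _ _) (add_le_add le_rfl (norm_add_le _ _))
      _ ≤ Mg * Mh / A + (K3 / A + K4 / A) := add_le_add hbGsmall (add_le_add hb3' hb4')
      _ = (Mg * Mh + K3 + K4) / A := by
          rw [← add_div, ← add_div, add_assoc]
      _ ≤ (Mg ^ 2 + Mg * Mh + 2⁻¹ + K1 + K2 + K3 + K4 + K5 + 1) / A := by
          refine (div_le_div_iff_of_pos_right hω0).mpr ?_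
          nlinarith [sq_nonneg Mg, hK10, hK20, hK50]


end Proofs18

/-- the Bessel integral asymptotics
`∫₀¹ j_a(ωt)² dt = 1/2 + O(1/ω)` and `∫₀¹ j_a(ωt) η_a(ωt) dt = O(1/ω)` for real `ω`. -/
theorem statement18 (a : ℕ) :
    ∃ C R : ℝ, 0 < C ∧ 0 < R ∧
      ∀ ω : ℝ, R ≤ |ω| →
        ‖(∫ t in (0:ℝ)..1, jb a ((ω * t : ℝ) : ℂ) ^ 2) - (1/2 : ℂ)‖ ≤ C / |ω| ∧
        ‖∫ t in (0:ℝ)..1, jb a ((ω * t : ℝ) : ℂ) * yb a ((ω * t : ℝ) : ℂ)‖ ≤ C / |ω| := by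
  classical
  obtain ⟨g, hgd, hge, hgr⟩ := jb_entire a
  obtain ⟨h, hhd, hhr⟩ := yb_entire a
  have h0 : ((PP a).1 ^ 2 + (PP a).2 ^ 2 - 1).coeff 0 = 0 := by
    rw [Polynomial.coeff_sub, F_coeff0]
    simp [Polynomial.coeff_one]
  have h1 : ((PP a).1 ^ 2 + (PP a).2 ^ 2 - 1).coeff 1 = 0 := by
    rw [Polynomial.coeff_sub, F_coeff1]
    simp [Polynomial.coeff_one]
  obtain ⟨S, hS⟩ := exists_X_sq _ h0 h1
  have hSid : (PP a).1 ^ 2 + (PP a).2 ^ 2 = 1 + Polynomial.X ^ 2 * S := by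
    linear_combination hS
  exact main_aux a g hgd h hhd (PP a).1 (PP a).2 S jb yb hgr hhr (jb_rep a) (yb_rep a) hSid
    sq_ident prod_ident osc dc_term
end
end
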